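/- arXiv:1504.01988 — 3 statements merged into one kernel-verified Lean document; each statement's English description precedes it below -/
import Mathlib

section
/- If (μ_t, ν_t, ζ_t)_{t∈[0,1]} are Borel families of measures with the disintegrated space-time measures μ = ∫₀¹ δ_t ⊗ μ_t dt, ν = ∫₀¹ δ_t ⊗ ν_t dt, ζ = ∫₀¹ δ_t ⊗ ζ_t dt, then the time-integrated action equals the space-time action: ∫₀¹ D^D(μ_t,ν_t,ζ_t) dt = D^{[0,1]×D}(μ,ν,ζ). -/
open scoped ENNReal
open Classical MeasureTheory

/-- The Benamou–Brenier integrand `φ(u,w) = |w|²/u` for `u > 0`, `φ(0,0) = 0`,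
`φ(0,w) = +∞` for `w ≠ 0`. -/
noncomputable def bbPhi {d : ℕ} (u : ℝ) (w : EuclideanSpace ℝ (Fin d)) : ℝ≥0∞ :=
  if 0 < u then ENNReal.ofReal (‖w‖ ^ 2 / u) else if w = 0 then 0 else ⊤

/-- The Benamou–Brenier action `A_BB(μ,ν)` on a domain with reference measure `L`.
The vector measure `ν` is given in polar form `ν = w · σ` with `σ = |ν|` and
`‖w‖ = 1` `σ`-a.e.; the functional is computed from the Lebesgue decompositions
of `μ` and `σ` with respect to `L`, the singular parts being written with respect
to a dominating measure `L^⊥`. -/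
noncomputable def Abb {α : Type*} [MeasurableSpace α] {d : ℕ}
    (L μ σ : Measure α) (w : α → EuclideanSpace ℝ (Fin d)) : ℝ≥0∞ :=
  (∫⁻ x, bbPhi ((μ.rnDeriv L x).toReal) (((σ.rnDeriv L x).toReal : ℝ) • w x) ∂L)
    + ∫⁻ x, bbPhi (((μ.singularPart L).rnDeriv (μ.singularPart L + σ.singularPart L) x).toReal)
        ((((σ.singularPart L).rnDeriv (μ.singularPart L + σ.singularPart L) x).toReal : ℝ) • w x)
        ∂(μ.singularPart L + σ.singularPart L)

/-- The source cost `A_Z(ζ) = ∫ z² d𝓛` if `ζ = z·𝓛` is absolutely continuous, `+∞`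
otherwise.  The signed measure `ζ` is given in polar form `ζ = s · ρ` with `ρ = |ζ|`. -/
noncomputable def Az {α : Type*} [MeasurableSpace α]
    (L ρ : Measure α) (s : α → ℝ) : ℝ≥0∞ :=
  if ρ ≪ L then ∫⁻ x, ENNReal.ofReal (((ρ.rnDeriv L x).toReal * s x) ^ 2) ∂L else ⊤

/-- The combined action functional `D(μ,ν,ζ) = A_BB(μ,ν) + (1/δ)·A_Z(ζ)`. -/
noncomputable def Dact {α : Type*} [MeasurableSpace α] {d : ℕ} (δ : ℝ)
    (L μ σ : Measure α) (w : α → EuclideanSpace ℝ (Fin d))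
    (ρ : Measure α) (s : α → ℝ) : ℝ≥0∞ :=
  Abb L μ σ w + ENNReal.ofReal (1 / δ) * Az L ρ s

/-- The space-time measure `∫₀¹ δ_t ⊗ μ_t dt` on `[0,1] × D`. -/
noncomputable def timeDisintegration {d : ℕ}
    (μ : ℝ → Measure (EuclideanSpace ℝ (Fin d))) :
    Measure (ℝ × EuclideanSpace ℝ (Fin d)) :=
  (volume.restrict (Set.Icc (0:ℝ) 1)).bind fun t => (μ t).map fun x => (t, x)

/-!
Divide the three families and `L = 𝓛|_D` by a measurable weight `g(t) ≥ 1` dominating their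
total masses. This makes them finite kernels `κ`, and every space-time measure becomes
`(g dt) ⊗ κ`. For composition products over a common base measure, the Radon–Nikodym derivative
and the singular part are computed fibrewise: `d(T ⊗ κ)/d(T ⊗ η) = dκ_t/dη_t` and
`(T ⊗ κ)^⊥ = T ⊗ κ^⊥`. Hence each term of the action of `T ⊗ κ` is the `T`-integral of the
fibre actions, and `A_Z` is `+∞` on both sides unless `κ_t ≪ η_t` for a.e. `t`. Rescaling all
measures by `c` leaves the densities unchanged and multiplies the action by `c`, which removes
the weight `g` again.
-/

open scoped NNReal
open ProbabilityTheory Set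

namespace MeasureTheory.Measure

variable {α γ : Type*} [MeasurableSpace α] [MeasurableSpace γ]

instance sigmaFinite_compProd (T : Measure α) [SigmaFinite T] (η : Kernel α γ)
    [IsFiniteKernel η] : SigmaFinite (T ⊗ₘ η) := by
  have hfst : (T ⊗ₘ η).map Prod.fst = T.withDensity fun a => η a univ := by
    ext A hA
    rw [map_apply measurable_fst hA, ← prod_univ, compProd_apply_prod hA .univ,
      withDensity_apply _ hA]
  have : SigmaFinite (T.withDensity fun a => η a univ) :=
    SigmaFinite.withDensity_of_ne_top' fun a => measure_ne_top _ _
  exact SigmaFinite.of_map _ measurable_fst.aemeasurable (hfst ▸ this)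

variable [MeasurableSpace.CountableOrCountablyGenerated α γ] (T : Measure α)
  (κ η : Kernel α γ) [IsFiniteKernel κ] [IsFiniteKernel η]

lemma mutuallySingular_compProd_singularPart : T ⊗ₘ κ.singularPart η ⟂ₘ T ⊗ₘ η :=
  MutuallySingular.compProd_of_right T T (.of_forall (Kernel.mutuallySingular_singularPart κ η))

lemma compProd_eq_singularPart_add_withDensity [SFinite T] :
    T ⊗ₘ κ = T ⊗ₘ κ.singularPart η
      + (T ⊗ₘ η).withDensity fun p => κ.rnDeriv η p.1 p.2 := by
  conv_lhs => rw [← κ.rnDeriv_add_singularPart η]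
  rw [compProd_add_right, compProd_withDensity (Kernel.measurable_rnDeriv κ η), add_comm]

lemma singularPart_compProd_right [SFinite T] :
    (T ⊗ₘ κ).singularPart (T ⊗ₘ η) = T ⊗ₘ κ.singularPart η :=
  (eq_singularPart (Kernel.measurable_rnDeriv κ η)
    (mutuallySingular_compProd_singularPart T κ η)
    (compProd_eq_singularPart_add_withDensity T κ η)).symm

lemma rnDeriv_compProd_right [SigmaFinite T] :
    (T ⊗ₘ κ).rnDeriv (T ⊗ₘ η) =ᵐ[T ⊗ₘ η] fun p => κ.rnDeriv η p.1 p.2 :=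
  (eq_rnDeriv (Kernel.measurable_rnDeriv κ η) (mutuallySingular_compProd_singularPart T κ η)
    (compProd_eq_singularPart_add_withDensity T κ η)).symm

end MeasureTheory.Measure

section Homogeneity

variable {β : Type*} [MeasurableSpace β] {d : ℕ}

noncomputable def rnDerivIntegral (F : ℝ≥0∞ → ℝ≥0∞ → β → ℝ≥0∞) (L μ σ : Measure β) : ℝ≥0∞ :=
  ∫⁻ x, F (μ.rnDeriv L x) (σ.rnDeriv L x) x ∂L

lemma rnDerivIntegral_smul (F : ℝ≥0∞ → ℝ≥0∞ → β → ℝ≥0∞) (L μ σ : Measure β) [SigmaFinite L]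
    [IsFiniteMeasure μ] [IsFiniteMeasure σ] {c : ℝ≥0} (hc : c ≠ 0) :
    rnDerivIntegral F (c • L) (c • μ) (c • σ) = c • rnDerivIntegral F L μ σ := by
  rw [rnDerivIntegral, rnDerivIntegral, lintegral_smul_measure]
  congr 1
  refine lintegral_congr_ae ?_
  filter_upwards [Measure.rnDeriv_smul_same μ L hc, Measure.rnDeriv_smul_same σ L hc]
    with x hμ hσ
  rw [hμ, hσ]

noncomputable def bbIntegrand (w : β → EuclideanSpace ℝ (Fin d)) (u v : ℝ≥0∞) (x : β) : ℝ≥0∞ :=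
  bbPhi u.toReal (v.toReal • w x)

noncomputable def sourceIntegrand (s : β → ℝ) (u _ : ℝ≥0∞) (x : β) : ℝ≥0∞ :=
  ENNReal.ofReal ((u.toReal * s x) ^ 2)

lemma Abb_eq_rnDerivIntegral (L μ σ : Measure β) (w : β → EuclideanSpace ℝ (Fin d)) :
    Abb L μ σ w = rnDerivIntegral (bbIntegrand w) L μ σ
      + rnDerivIntegral (bbIntegrand w) (μ.singularPart L + σ.singularPart L)
          (μ.singularPart L) (σ.singularPart L) :=
  rfl

lemma Az_eq_rnDerivIntegral (L ρ : Measure β) (s : β → ℝ) :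
    Az L ρ s = if ρ ≪ L then rnDerivIntegral (sourceIntegrand s) L ρ ρ else ⊤ :=
  rfl

variable (L : Measure β) [SigmaFinite L] {c : ℝ≥0}

lemma Abb_smul (μ σ : Measure β) [IsFiniteMeasure μ] [IsFiniteMeasure σ]
    (w : β → EuclideanSpace ℝ (Fin d)) (hc : c ≠ 0) :
    Abb (c • L) (c • μ) (c • σ) w = c • Abb L μ σ w := by
  have hsing (ν : Measure β) : (c • ν).singularPart (c • L) = c • ν.singularPart L := by
    rw [Measure.singularPart_smul_right _ _ _ hc, Measure.singularPart_smul]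
  rw [Abb_eq_rnDerivIntegral, Abb_eq_rnDerivIntegral, hsing, hsing, ← smul_add,
    rnDerivIntegral_smul _ _ _ _ hc, rnDerivIntegral_smul _ _ _ _ hc, smul_add]

lemma Az_smul (ρ : Measure β) [IsFiniteMeasure ρ] (s : β → ℝ) (hc : c ≠ 0) :
    Az (c • L) (c • ρ) s = c • Az L ρ s := by
  have hc' : (c : ℝ≥0∞) ≠ 0 := ENNReal.coe_ne_zero.mpr hc
  have hac : c • ρ ≪ c • L ↔ ρ ≪ L :=
    ⟨fun h => (Measure.absolutelyContinuous_smul hc').trans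
        (h.trans Measure.smul_absolutelyContinuous),
      fun h => Measure.smul_absolutelyContinuous.trans
        (h.trans (Measure.absolutelyContinuous_smul hc'))⟩
  rw [Az_eq_rnDerivIntegral, Az_eq_rnDerivIntegral, hac]
  split_ifs
  · exact rnDerivIntegral_smul _ _ _ _ hc
  · rw [ENNReal.smul_def, smul_eq_mul, ENNReal.mul_top hc']

lemma Dact_smul (δ : ℝ) (μ σ ρ : Measure β) [IsFiniteMeasure μ] [IsFiniteMeasure σ]
    [IsFiniteMeasure ρ] (w : β → EuclideanSpace ℝ (Fin d)) (s : β → ℝ) (hc : c ≠ 0) :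
    Dact δ (c • L) (c • μ) (c • σ) w (c • ρ) s = c • Dact δ L μ σ w ρ s := by
  rw [Dact, Dact, Abb_smul L μ σ w hc, Az_smul L ρ s hc, smul_add, mul_smul_comm]

end Homogeneity

section CompProd

variable {α γ : Type*} [MeasurableSpace α] [MeasurableSpace γ]
  [MeasurableSpace.CountableOrCountablyGenerated α γ] {F : ℝ≥0∞ → ℝ≥0∞ → α × γ → ℝ≥0∞}

lemma measurable_comp_kernel_rnDeriv (κ κ' η : Kernel α γ)
    (hF : Measurable fun q : ℝ≥0∞ × ℝ≥0∞ × (α × γ) => F q.1 q.2.1 q.2.2) :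
    Measurable fun p : α × γ => F (κ.rnDeriv η p.1 p.2) (κ'.rnDeriv η p.1 p.2) p :=
  hF.comp ((Kernel.measurable_rnDeriv κ η).prodMk
    ((Kernel.measurable_rnDeriv κ' η).prodMk measurable_id))

variable (κ κ' η : Kernel α γ) [IsFiniteKernel κ] [IsFiniteKernel κ'] [IsFiniteKernel η]

lemma rnDerivIntegral_kernel_apply (G : ℝ≥0∞ → ℝ≥0∞ → γ → ℝ≥0∞) (a : α) :
    rnDerivIntegral G (η a) (κ a) (κ' a)
      = ∫⁻ x, G (κ.rnDeriv η a x) (κ'.rnDeriv η a x) x ∂(η a) := by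
  refine lintegral_congr_ae ?_
  filter_upwards [κ.rnDeriv_eq_rnDeriv_measure (η := η) (a := a),
    κ'.rnDeriv_eq_rnDeriv_measure (η := η) (a := a)] with x hκ hκ'
  rw [hκ, hκ']

lemma measurable_rnDerivIntegral_kernel
    (hF : Measurable fun q : ℝ≥0∞ × ℝ≥0∞ × (α × γ) => F q.1 q.2.1 q.2.2) :
    Measurable fun a => rnDerivIntegral (fun u v x => F u v (a, x)) (η a) (κ a) (κ' a) := by
  simp_rw [rnDerivIntegral_kernel_apply]
  exact (measurable_comp_kernel_rnDeriv κ κ' η hF).lintegral_kernel_prod_right'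

lemma rnDerivIntegral_compProd (T : Measure α) [SigmaFinite T]
    (hF : Measurable fun q : ℝ≥0∞ × ℝ≥0∞ × (α × γ) => F q.1 q.2.1 q.2.2) :
    rnDerivIntegral F (T ⊗ₘ η) (T ⊗ₘ κ) (T ⊗ₘ κ')
      = ∫⁻ a, rnDerivIntegral (fun u v x => F u v (a, x)) (η a) (κ a) (κ' a) ∂T := by
  simp_rw [rnDerivIntegral_kernel_apply]
  rw [rnDerivIntegral, ← Measure.lintegral_compProd (measurable_comp_kernel_rnDeriv κ κ' η hF)]
  refine lintegral_congr_ae ?_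
  filter_upwards [Measure.rnDeriv_compProd_right T κ η, Measure.rnDeriv_compProd_right T κ' η]
    with p hκ hκ'
  rw [hκ, hκ']

end CompProd

section ActionCompProd

variable {α γ : Type*} [MeasurableSpace α] [MeasurableSpace γ] {d : ℕ}

lemma measurable_bbPhi :
    Measurable fun q : ℝ × EuclideanSpace ℝ (Fin d) => bbPhi q.1 q.2 := by
  refine Measurable.ite (measurableSet_lt measurable_const measurable_fst) ?_ ?_
  · exact ((measurable_snd.norm.pow_const 2).div measurable_fst).ennreal_ofReal
  · exact Measurable.ite (measurable_snd (measurableSet_singleton 0)) measurable_const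
      measurable_const

lemma measurable_bbIntegrand {w : α × γ → EuclideanSpace ℝ (Fin d)} (hw : Measurable w) :
    Measurable fun q : ℝ≥0∞ × ℝ≥0∞ × (α × γ) => bbIntegrand w q.1 q.2.1 q.2.2 :=
  measurable_bbPhi.comp (measurable_fst.ennreal_toReal.prodMk
    ((measurable_snd.fst.ennreal_toReal).smul (hw.comp measurable_snd.snd)))

lemma measurable_sourceIntegrand {s : α × γ → ℝ} (hs : Measurable s) :
    Measurable fun q : ℝ≥0∞ × ℝ≥0∞ × (α × γ) => sourceIntegrand s q.1 q.2.1 q.2.2 :=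
  ((measurable_fst.ennreal_toReal.mul (hs.comp measurable_snd.snd)).pow_const 2).ennreal_ofReal

variable [MeasurableSpace.CountableOrCountablyGenerated α γ] (T : Measure α) [SigmaFinite T]
  (κ κ' η : Kernel α γ) [IsFiniteKernel κ] [IsFiniteKernel κ'] [IsFiniteKernel η]

lemma Abb_kernel_apply (w : γ → EuclideanSpace ℝ (Fin d)) (a : α) :
    Abb (η a) (κ a) (κ' a) w = rnDerivIntegral (bbIntegrand w) (η a) (κ a) (κ' a)
      + rnDerivIntegral (bbIntegrand w) ((κ.singularPart η + κ'.singularPart η) a)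
          (κ.singularPart η a) (κ'.singularPart η a) := by
  rw [Abb_eq_rnDerivIntegral, add_apply, Kernel.singularPart_eq_singularPart_measure,
    Kernel.singularPart_eq_singularPart_measure]

lemma Abb_compProd {w : α × γ → EuclideanSpace ℝ (Fin d)} (hw : Measurable w) :
    Abb (T ⊗ₘ η) (T ⊗ₘ κ) (T ⊗ₘ κ') w
      = ∫⁻ a, Abb (η a) (κ a) (κ' a) (fun x => w (a, x)) ∂T := by
  rw [Abb_eq_rnDerivIntegral, Measure.singularPart_compProd_right,
    Measure.singularPart_compProd_right, ← Measure.compProd_add_right,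
    rnDerivIntegral_compProd _ _ _ _ (measurable_bbIntegrand hw),
    rnDerivIntegral_compProd _ _ _ _ (measurable_bbIntegrand hw),
    ← lintegral_add_left (measurable_rnDerivIntegral_kernel κ κ' η (measurable_bbIntegrand hw))]
  exact lintegral_congr fun a => (Abb_kernel_apply κ κ' η _ a).symm

lemma Az_compProd {s : α × γ → ℝ} (hs : Measurable s) :
    Az (T ⊗ₘ η) (T ⊗ₘ κ) s = ∫⁻ a, Az (η a) (κ a) (fun x => s (a, x)) ∂T := by
  by_cases hac : ∀ᵐ a ∂T, κ a ≪ η a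
  · rw [Az_eq_rnDerivIntegral, if_pos (Measure.absolutelyContinuous_compProd_right_iff.mpr hac),
      rnDerivIntegral_compProd _ _ _ _ (measurable_sourceIntegrand hs)]
    refine lintegral_congr_ae ?_
    filter_upwards [hac] with a ha
    rw [Az_eq_rnDerivIntegral, if_pos ha]
    rfl
  · rw [Az_eq_rnDerivIntegral,
      if_neg (mt Measure.absolutelyContinuous_compProd_right_iff.mp hac), eq_comm, eq_top_iff]
    set N := {a | ¬ κ a ≪ η a}
    have hN : MeasurableSet N := (Kernel.measurableSet_absolutelyContinuous κ η).compl
    have hTN : T N ≠ 0 := hac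
    calc ⊤ = ∫⁻ a, N.indicator (fun _ => ⊤) a ∂T := by
          rw [lintegral_indicator_const hN, ENNReal.top_mul hTN]
      _ ≤ _ := lintegral_mono (indicator_le fun a ha => by
          rw [Az_eq_rnDerivIntegral, if_neg ha])

lemma Dact_compProd (κ'' : Kernel α γ) [IsFiniteKernel κ''] (δ : ℝ)
    {w : α × γ → EuclideanSpace ℝ (Fin d)} (hw : Measurable w) {s : α × γ → ℝ}
    (hs : Measurable s) :
    Dact δ (T ⊗ₘ η) (T ⊗ₘ κ) (T ⊗ₘ κ') w (T ⊗ₘ κ'') s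
      = ∫⁻ a, Dact δ (η a) (κ a) (κ' a) (fun x => w (a, x)) (κ'' a) (fun x => s (a, x)) ∂T := by
  have hAbb : Measurable fun a => Abb (η a) (κ a) (κ' a) (fun x => w (a, x)) := by
    simp_rw [Abb_kernel_apply]
    exact (measurable_rnDerivIntegral_kernel κ κ' η (measurable_bbIntegrand hw)).add
      (measurable_rnDerivIntegral_kernel _ _ _ (measurable_bbIntegrand hw))
  rw [Dact, Abb_compProd T κ κ' η hw, Az_compProd T κ'' η hs,
    ← lintegral_const_mul' _ _ ENNReal.ofReal_ne_top, ← lintegral_add_left hAbb]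
  rfl

end ActionCompProd

section Disintegration

variable {α γ : Type*} [MeasurableSpace α] [MeasurableSpace γ]

lemma exists_measurable_nnreal_ge (f : α → ℝ≥0∞) (hf : Measurable f) (hfin : ∀ a, f a ≠ ⊤) :
    ∃ g : α → ℝ≥0, Measurable g ∧ (∀ a, g a ≠ 0) ∧ ∀ a, f a ≤ g a :=
  ⟨fun a => (f a).toNNReal + 1, hf.ennreal_toNNReal.add_const 1,
    fun _ => by positivity,
    fun a => (ENNReal.coe_toNNReal (hfin a)).symm.le.trans (by exact_mod_cast le_self_add)⟩

lemma exists_isFiniteKernel_smul_eq (m : α → Measure γ)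
    (hm : ∀ A, MeasurableSet A → Measurable fun a => m a A) {g : α → ℝ≥0} (hg : Measurable g)
    (hg0 : ∀ a, g a ≠ 0) (hmg : ∀ a, m a univ ≤ g a) :
    ∃ κ : Kernel α γ, IsFiniteKernel κ ∧ ∀ a, g a • κ a = m a := by
  refine ⟨⟨fun a => (g a)⁻¹ • m a, Measure.measurable_of_measurable_coe _ fun A hA => ?_⟩,
    ⟨⟨1, ENNReal.one_lt_top, fun a => ?_⟩⟩, fun a => smul_inv_smul₀ (hg0 a) _⟩
  · simp only [Measure.smul_apply, ENNReal.smul_def, smul_eq_mul]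
    exact hg.inv.coe_nnreal_ennreal.mul (hm A hA)
  · calc ((g a)⁻¹ • m a) univ = (g a : ℝ≥0∞)⁻¹ * m a univ := by
          rw [Measure.smul_apply, ENNReal.smul_def, smul_eq_mul, ENNReal.coe_inv (hg0 a)]
      _ ≤ (g a : ℝ≥0∞)⁻¹ * g a := by gcongr; exact hmg a
      _ = 1 := ENNReal.inv_mul_cancel (by simpa using hg0 a) ENNReal.coe_ne_top

lemma bind_map_prodMk_eq_withDensity_compProd (T : Measure α) [SFinite T]
    (m : α → Measure γ) {g : α → ℝ≥0} (hg : Measurable g) (κ : Kernel α γ) [IsSFiniteKernel κ]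
    (hκ : ∀ a, g a • κ a = m a) :
    T.bind (fun a => (m a).map fun x => (a, x)) = T.withDensity (fun a => g a) ⊗ₘ κ := by
  have happly (a : α) {A : Set (α × γ)} (hA : MeasurableSet A) :
      (m a).map (fun x => (a, x)) A = g a * κ a (Prod.mk a ⁻¹' A) := by
    rw [Measure.map_apply measurable_prodMk_left hA, ← hκ a, Measure.smul_apply,
      ENNReal.smul_def, smul_eq_mul]
  have hmeas : Measurable fun a => (m a).map fun x => (a, x) :=
    Measure.measurable_of_measurable_coe _ fun A hA => by
      simp_rw [happly _ hA]
      exact hg.coe_nnreal_ennreal.mul (κ.measurable_kernel_prodMk_left hA)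
  ext A hA
  rw [Measure.bind_apply hA hmeas.aemeasurable, Measure.compProd_apply hA,
    lintegral_withDensity_eq_lintegral_mul _ hg.coe_nnreal_ennreal
      (κ.measurable_kernel_prodMk_left hA)]
  exact lintegral_congr fun a => happly a hA

lemma lintegral_Dact_eq_Dact_withDensity_compProd {d : ℕ} (T : Measure α) [SigmaFinite T]
    [MeasurableSpace.CountableOrCountablyGenerated α γ] {g : α → ℝ≥0} (hg : Measurable g)
    (hg0 : ∀ a, g a ≠ 0) (δ : ℝ) (κL κμ κσ κρ : Kernel α γ) [IsFiniteKernel κL]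
    [IsFiniteKernel κμ] [IsFiniteKernel κσ] [IsFiniteKernel κρ]
    {w : α × γ → EuclideanSpace ℝ (Fin d)} (hw : Measurable w) {s : α × γ → ℝ}
    (hs : Measurable s) :
    ∫⁻ a, Dact δ (g a • κL a) (g a • κμ a) (g a • κσ a) (fun x => w (a, x)) (g a • κρ a)
        (fun x => s (a, x)) ∂T
      = Dact δ (T.withDensity (fun a => g a) ⊗ₘ κL) (T.withDensity (fun a => g a) ⊗ₘ κμ)
          (T.withDensity (fun a => g a) ⊗ₘ κσ) w (T.withDensity (fun a => g a) ⊗ₘ κρ) s := by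
  have : SigmaFinite (T.withDensity fun a => g a) :=
    SigmaFinite.withDensity_of_ne_top' fun _ => ENNReal.coe_ne_top
  rw [Dact_compProd _ κμ κσ κL κρ δ hw hs, lintegral_withDensity_eq_lintegral_mul_non_measurable
    _ hg.coe_nnreal_ennreal (ae_of_all _ fun _ => ENNReal.coe_lt_top)]
  refine lintegral_congr fun a => ?_
  rw [Dact_smul _ _ _ _ _ _ _ (hg0 a)]
  rfl

end Disintegration

theorem action_time_integral_eq_spacetime_general {d : ℕ}
    (D : Set (EuclideanSpace ℝ (Fin d)))
    (hDbdd : Bornology.IsBounded D) (δ : ℝ)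
    (μ σ ρ : ℝ → Measure (EuclideanSpace ℝ (Fin d)))
    (w : ℝ → EuclideanSpace ℝ (Fin d) → EuclideanSpace ℝ (Fin d))
    (s : ℝ → EuclideanSpace ℝ (Fin d) → ℝ)
    (hμfin : ∀ t, IsFiniteMeasure (μ t)) (hσfin : ∀ t, IsFiniteMeasure (σ t))
    (hρfin : ∀ t, IsFiniteMeasure (ρ t))
    (hμmeas : ∀ A : Set (EuclideanSpace ℝ (Fin d)), MeasurableSet A →
      Measurable fun t => μ t A)
    (hσmeas : ∀ A : Set (EuclideanSpace ℝ (Fin d)), MeasurableSet A →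
      Measurable fun t => σ t A)
    (hρmeas : ∀ A : Set (EuclideanSpace ℝ (Fin d)), MeasurableSet A →
      Measurable fun t => ρ t A)
    (hwmeas : Measurable fun p : ℝ × EuclideanSpace ℝ (Fin d) => w p.1 p.2)
    (hsmeas : Measurable fun p : ℝ × EuclideanSpace ℝ (Fin d) => s p.1 p.2) :
    (∫⁻ t in Set.Icc (0:ℝ) 1,
        Dact δ (volume.restrict D) (μ t) (σ t) (w t) (ρ t) (s t))
      = Dact δ ((volume : Measure (ℝ × EuclideanSpace ℝ (Fin d))).restrict
            (Set.Icc (0:ℝ) 1 ×ˢ D))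
          (timeDisintegration μ) (timeDisintegration σ)
          (fun p => w p.1 p.2) (timeDisintegration ρ) (fun p => s p.1 p.2) := by
  set T : Measure ℝ := volume.restrict (Icc 0 1)
  set L : Measure (EuclideanSpace ℝ (Fin d)) := volume.restrict D
  have : IsFiniteMeasure L := isFiniteMeasure_restrict.mpr hDbdd.measure_lt_top.ne
  obtain ⟨g, hg, hg0, hfg⟩ := exists_measurable_nnreal_ge
    (fun t => μ t univ + σ t univ + ρ t univ + L univ)
    ((((hμmeas _ .univ).add (hσmeas _ .univ)).add (hρmeas _ .univ)).add_const _)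
    (fun t => by simp [measure_ne_top])
  obtain ⟨κμ, _, hκμ⟩ := exists_isFiniteKernel_smul_eq μ hμmeas hg hg0 fun t =>
    (hfg t).trans' (le_add_right (le_add_right le_self_add))
  obtain ⟨κσ, _, hκσ⟩ := exists_isFiniteKernel_smul_eq σ hσmeas hg hg0 fun t =>
    (hfg t).trans' (le_add_right (le_add_right le_add_self))
  obtain ⟨κρ, _, hκρ⟩ := exists_isFiniteKernel_smul_eq ρ hρmeas hg hg0 fun t =>
    (hfg t).trans' (le_add_right le_add_self)
  obtain ⟨κL, _, hκL⟩ := exists_isFiniteKernel_smul_eq (fun _ => L)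
    (fun _ _ => measurable_const) hg hg0 fun t => (hfg t).trans' le_add_self
  have hvol : (volume : Measure (ℝ × EuclideanSpace ℝ (Fin d))).restrict (Icc 0 1 ×ˢ D)
      = T.withDensity (fun t => g t) ⊗ₘ κL := by
    rw [Measure.volume_eq_prod, ← Measure.prod_restrict, Measure.prod]
    exact bind_map_prodMk_eq_withDensity_compProd T (fun _ => L) hg κL hκL
  calc (∫⁻ t in Icc 0 1, Dact δ L (μ t) (σ t) (w t) (ρ t) (s t))
      = ∫⁻ t, Dact δ (g t • κL t) (g t • κμ t) (g t • κσ t) (w t) (g t • κρ t) (s t) ∂T :=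
        lintegral_congr fun t => by rw [hκL, hκμ, hκσ, hκρ]
    _ = _ := lintegral_Dact_eq_Dact_withDensity_compProd T hg hg0 δ κL κμ κσ κρ hwmeas hsmeas
    _ = _ := by
        rw [hvol, ← bind_map_prodMk_eq_withDensity_compProd T μ hg κμ hκμ,
          ← bind_map_prodMk_eq_withDensity_compProd T σ hg κσ hκσ,
          ← bind_map_prodMk_eq_withDensity_compProd T ρ hg κρ hκρ]
        rfl

/-- **Time-integrated action equals space-time action**:
`∫₀¹ D^D(μ_t,ν_t,ζ_t) dt = D^{[0,1]×D}(μ,ν,ζ)` for the disintegrated space-time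
measures `μ = ∫₀¹ δ_t ⊗ μ_t dt` etc. -/
theorem action_time_integral_eq_spacetime {d : ℕ}
    (D : Set (EuclideanSpace ℝ (Fin d))) (hDopen : IsOpen D)
    (hDbdd : Bornology.IsBounded D) (δ : ℝ) (hδ : 0 < δ)
    (μ σ ρ : ℝ → Measure (EuclideanSpace ℝ (Fin d)))
    (w : ℝ → EuclideanSpace ℝ (Fin d) → EuclideanSpace ℝ (Fin d))
    (s : ℝ → EuclideanSpace ℝ (Fin d) → ℝ)
    (hμfin : ∀ t, IsFiniteMeasure (μ t)) (hσfin : ∀ t, IsFiniteMeasure (σ t))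
    (hρfin : ∀ t, IsFiniteMeasure (ρ t))
    (hμmeas : ∀ A : Set (EuclideanSpace ℝ (Fin d)), MeasurableSet A →
      Measurable fun t => μ t A)
    (hσmeas : ∀ A : Set (EuclideanSpace ℝ (Fin d)), MeasurableSet A →
      Measurable fun t => σ t A)
    (hρmeas : ∀ A : Set (EuclideanSpace ℝ (Fin d)), MeasurableSet A →
      Measurable fun t => ρ t A)
    (hwmeas : Measurable fun p : ℝ × EuclideanSpace ℝ (Fin d) => w p.1 p.2)
    (hsmeas : Measurable fun p : ℝ × EuclideanSpace ℝ (Fin d) => s p.1 p.2)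
    (hw : ∀ t, ∀ᵐ x ∂ σ t, ‖w t x‖ = 1) (hs : ∀ t, ∀ᵐ x ∂ ρ t, |s t x| = 1)
    (hsupp : ∀ t, μ t (closure D)ᶜ = 0 ∧ σ t (closure D)ᶜ = 0 ∧ ρ t (closure D)ᶜ = 0) :
    (∫⁻ t in Set.Icc (0:ℝ) 1,
        Dact δ (volume.restrict D) (μ t) (σ t) (w t) (ρ t) (s t))
      = Dact δ ((volume : Measure (ℝ × EuclideanSpace ℝ (Fin d))).restrict
            (Set.Icc (0:ℝ) 1 ×ˢ D))
          (timeDisintegration μ) (timeDisintegration σ)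
          (fun p => w p.1 p.2) (timeDisintegration ρ) (fun p => s p.1 p.2) :=
  action_time_integral_eq_spacetime_general D hDbdd δ μ σ ρ w s hμfin hσfin hρfin hμmeas hσmeas
    hρmeas hwmeas hsmeas
end

section
/- Let W be a C² hyperelastic energy density with W(Id) = 0, DW(Id) = 0, and (1/2)D²W(Id)(B,B) = (λ/2)(tr B)² + μ·tr(((B+Bᵀ)/2)²). For smooth velocities v(t), setting φ_k^K = (1/K)v(k/K) + Id, the discrete dissipation K·Σ_{k=1}^K ∫_D W(Dφ_k^K) + ε|D^m φ_k^K|² dx converges as K → ∞ to ∫₀¹∫_D (λ/2)(tr Dv)² + μ·tr(ε[v]²) + ε|D^m v|² dx dt, where ε[v] = (Dv + Dvᵀ)/2. -/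
open Filter Metric

lemma taylor2_aux {X : Type*} [NormedAddCommGroup X] [NormedSpace ℝ X]
    {W : X → ℝ} (hW : ContDiff ℝ 2 W) (a : X) (hWa : W a = 0) (hDWa : fderiv ℝ W a = 0)
    {ε : ℝ} (hε : 0 < ε) :
    ∃ δ > 0, ∀ h : X, ‖h‖ ≤ δ →
      |W (a + h) - (1/2) * (fderiv ℝ (fderiv ℝ W) a h h)| ≤ ε * ‖h‖ ^ 2 := by
  have hW1 : ContDiff ℝ 1 (fderiv ℝ W) := hW.fderiv_right (by norm_num)
  set H := fderiv ℝ (fderiv ℝ W) with hH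
  have hHcont : Continuous H := hW1.continuous_fderiv one_ne_zero
  obtain ⟨δ, hδ, hball⟩ : ∃ δ > 0, ∀ x, dist x a < δ → dist (H x) (H a) < ε := by
    have := (Metric.continuousAt_iff (f := H) (a := a)).1 (by exact hHcont.continuousAt) ε hε
    obtain ⟨δ, hδ, hd⟩ := this
    exact ⟨δ, hδ, fun x hx => hd hx⟩
  refine ⟨δ/2, by positivity, fun h hh => ?_⟩
  have hWdiff : ∀ y, HasFDerivAt W (fderiv ℝ W y) y := fun y =>
    ((hW.differentiable (by norm_num)) y).hasFDerivAt
  have hsymm : ∀ u w, H a u w = H a w u := fun u w =>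
    second_derivative_symmetric hWdiff ((hW1.differentiable one_ne_zero a).hasFDerivAt) u w
  -- key1 : first derivative estimate on the ball of radius ‖h‖
  have hsub : Metric.closedBall a ‖h‖ ⊆ Metric.closedBall a (δ/2) :=
    Metric.closedBall_subset_closedBall hh
  have key1 : ∀ y ∈ Metric.closedBall a ‖h‖, ‖fderiv ℝ W y - H a (y - a)‖ ≤ ε * ‖h‖ := by
    intro y hy
    have hyh : ‖y - a‖ ≤ ‖h‖ := by simpa [dist_eq_norm] using hy
    have hφ : ∀ x ∈ Metric.closedBall a ‖h‖,
        HasFDerivWithinAt (fun x => fderiv ℝ W x - H a (x - a)) (H x - H a)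
          (Metric.closedBall a ‖h‖) x := by
      intro x hx
      have h1 : HasFDerivAt (fderiv ℝ W) (H x) x := (hW1.differentiable one_ne_zero x).hasFDerivAt
      have h2 : HasFDerivAt (fun y => H a (y - a)) (H a) x := by
        have : (fun y : X => H a (y - a)) = fun y => H a y - H a a := by
          ext y; rw [map_sub]
        rw [this]
        exact ((H a).hasFDerivAt).sub_const (H a a)
      exact (h1.sub h2).hasFDerivWithinAt
    have hbound : ∀ x ∈ Metric.closedBall a ‖h‖, ‖H x - H a‖ ≤ ε := by
      intro x hx
      have : dist x a < δ := by
        have := hsub hx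
        simp only [Metric.mem_closedBall] at this
        linarith
      exact le_of_lt (lt_of_eq_of_lt (dist_eq_norm (H x) (H a)).symm (hball x this))
    have := (convex_closedBall a ‖h‖).norm_image_sub_le_of_norm_hasFDerivWithin_le
      hφ hbound (Metric.mem_closedBall_self (norm_nonneg h)) hy
    have h2 : ε * ‖y - a‖ ≤ ε * ‖h‖ := by nlinarith
    have h3 : ‖fderiv ℝ W y - H a (y - a)‖ ≤ ε * ‖y - a‖ := by
      simpa [hDWa, sub_self, map_sub] using this
    linarith
  -- second step
  set ψ : X → ℝ := fun x => W x - (1/2 : ℝ) * (H a (x - a) (x - a)) with hψ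
  have hψderiv : ∀ x, HasFDerivAt ψ (fderiv ℝ W x - H a (x - a)) x := by
    intro x
    have hb : IsBoundedBilinearMap ℝ (fun p : X × X => H a p.1 p.2) :=
      (H a).isBoundedBilinearMap
    have hg : HasFDerivAt (fun y : X => (y - a, y - a))
        ((ContinuousLinearMap.id ℝ X).prod (ContinuousLinearMap.id ℝ X)) x := by
      exact ((hasFDerivAt_id x).sub_const a).prodMk ((hasFDerivAt_id x).sub_const a)
    have hq : HasFDerivAt (fun y : X => H a (y - a) (y - a))
        ((hb.deriv (x - a, x - a)).comp
          ((ContinuousLinearMap.id ℝ X).prod (ContinuousLinearMap.id ℝ X))) x :=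
      by have h := HasFDerivAt.comp x (hb.hasFDerivAt (x - a, x - a)) hg; exact h
    have hq2 : HasFDerivAt (fun y : X => (1/2 : ℝ) * (H a (y - a) (y - a)))
        ((1/2 : ℝ) • ((hb.deriv (x - a, x - a)).comp
          ((ContinuousLinearMap.id ℝ X).prod (ContinuousLinearMap.id ℝ X)))) x :=
      hq.const_mul _
    have hEq : (1/2 : ℝ) • ((hb.deriv (x - a, x - a)).comp
          ((ContinuousLinearMap.id ℝ X).prod (ContinuousLinearMap.id ℝ X))) = H a (x - a) := by
      ext w
      simp [IsBoundedBilinearMap.deriv_apply, hsymm w (x - a)]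
      ring
    rw [hEq] at hq2
    exact (hWdiff x).sub hq2
  have hψball : ∀ x ∈ Metric.closedBall a ‖h‖,
      HasFDerivWithinAt ψ (fderiv ℝ W x - H a (x - a)) (Metric.closedBall a ‖h‖) x :=
    fun x _ => (hψderiv x).hasFDerivWithinAt
  have hmem : a + h ∈ Metric.closedBall a ‖h‖ := by
    simp [Metric.mem_closedBall, dist_eq_norm]
  have key2 := (convex_closedBall a ‖h‖).norm_image_sub_le_of_norm_hasFDerivWithin_le
    hψball key1 (Metric.mem_closedBall_self (norm_nonneg h)) hmem
  have hψa : ψ a = 0 := by simp [hψ, hWa]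
  have hψah : ψ (a + h) = W (a + h) - (1/2 : ℝ) * (H a h h) := by
    simp [hψ, add_sub_cancel_left]; ring
  rw [hψah, hψa, sub_zero] at key2
  calc |W (a + h) - 1/2 * (H a h h)| ≤ ε * ‖h‖ * ‖a + h - a‖ := by
        simpa [Real.norm_eq_abs] using key2
    _ = ε * ‖h‖ ^ 2 := by rw [add_sub_cancel_left]; ring

lemma iteratedFDeriv_id_eq_zero {E : Type*} [NormedAddCommGroup E] [NormedSpace ℝ E]
    {n : ℕ} (hn : 2 ≤ n) (x : E) :
    iteratedFDeriv ℝ n (fun y : E => y) x = 0 := by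
  obtain ⟨k, rfl⟩ : ∃ k, n = k + 2 := ⟨n - 2, by omega⟩
  ext w
  rw [iteratedFDeriv_succ_apply_right]
  have : (fderiv ℝ (fun y : E => y)) = fun _ => ContinuousLinearMap.id ℝ E := by
    ext y : 1; exact fderiv_id'
  rw [this, iteratedFDeriv_const_of_ne (by omega : k + 1 ≠ 0)]
  simp

lemma iteratedFDeriv_id_add {E : Type*} [NormedAddCommGroup E] [NormedSpace ℝ E]
    {f : E → E} {n : ℕ} (hf : ContDiff ℝ n f) (hn : 2 ≤ n) (c : ℝ) (x : E) :
    iteratedFDeriv ℝ n (fun y => y + c • f y) x = c • iteratedFDeriv ℝ n f x := by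
  have h1 : iteratedFDeriv ℝ n (fun y : E => y + c • f y) x
      = iteratedFDeriv ℝ n (fun y : E => y) x + iteratedFDeriv ℝ n (fun y => c • f y) x :=
    iteratedFDeriv_add_apply' contDiff_id.contDiffAt (hf.const_smul c).contDiffAt
  rw [h1, iteratedFDeriv_id_eq_zero hn, zero_add, iteratedFDeriv_const_smul_apply' hf.contDiffAt]

open Function

lemma contDiff_parametric_iteratedFDeriv {E F : Type*} [NormedAddCommGroup E] [NormedSpace ℝ E]
    [NormedAddCommGroup F] [NormedSpace ℝ F]
    {v : ℝ → E → F} (hv : ContDiff ℝ (⊤ : ℕ∞) fun p : ℝ × E => v p.1 p.2) (n : ℕ) :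
    ContDiff ℝ (⊤ : ℕ∞) fun p : ℝ × E => iteratedFDeriv ℝ n (v p.1) p.2 := by
  induction n with
  | zero =>
      have : (fun p : ℝ × E => iteratedFDeriv ℝ 0 (v p.1) p.2)
          = fun p : ℝ × E =>
            (continuousMultilinearCurryFin0 ℝ E F).symm (v p.1 p.2) := by
        ext p : 1
        rw [iteratedFDeriv_zero_eq_comp]; rfl
      rw [this]
      exact (continuousMultilinearCurryFin0 ℝ E F).symm.contDiff.comp hv
  | succ n ih =>
      have hinner : ContDiff ℝ (⊤ : ℕ∞)
          (fun p : ℝ × E => fderiv ℝ (iteratedFDeriv ℝ n (v p.1)) p.2) := by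
        apply ContDiff.fderiv (f := fun (p : ℝ × E) (y : E) => iteratedFDeriv ℝ n (v p.1) y)
          (g := fun p : ℝ × E => p.2)
        · have : (uncurry fun (p : ℝ × E) (y : E) => iteratedFDeriv ℝ n (v p.1) y)
              = (fun p : ℝ × E => iteratedFDeriv ℝ n (v p.1) p.2)
                ∘ (fun q : (ℝ × E) × E => (q.1.1, q.2)) := rfl
          rw [this]
          exact ih.comp ((contDiff_fst.fst).prodMk contDiff_snd)
        · exact contDiff_snd
        · exact le_of_eq (by simp)
      have : (fun p : ℝ × E => iteratedFDeriv ℝ (n + 1) (v p.1) p.2)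
          = fun p : ℝ × E =>
            (continuousMultilinearCurryLeftEquiv ℝ (fun _ : Fin (n + 1) => E) F).symm
              (fderiv ℝ (iteratedFDeriv ℝ n (v p.1)) p.2) := by
        ext p : 1
        rw [iteratedFDeriv_succ_eq_comp_left]; rfl
      rw [this]
      exact (continuousMultilinearCurryLeftEquiv ℝ (fun _ : Fin (n + 1) => E) F).symm.contDiff.comp
        hinner

open MeasureTheory Finset

lemma riemann_sum_tendsto {f : ℝ → ℝ} (hf : Continuous f) :
    Filter.Tendsto (fun K : ℕ => ∑ k ∈ Finset.Icc 1 K, (K : ℝ)⁻¹ * f (k / K)) Filter.atTop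
      (nhds (∫ t in (0:ℝ)..1, f t)) := by
  rw [Metric.tendsto_atTop]
  intro ε hε
  obtain ⟨δ, hδ, hunif⟩ : ∃ δ > 0, ∀ x ∈ Set.Icc (0:ℝ) 1, ∀ y ∈ Set.Icc (0:ℝ) 1,
      dist x y ≤ δ → dist (f x) (f y) ≤ ε / 2 := by
    have h1 : UniformContinuousOn f (Set.Icc (0:ℝ) 1) :=
      (isCompact_Icc).uniformContinuousOn_of_continuous hf.continuousOn
    have := (Metric.uniformContinuousOn_iff_le).1 h1 (ε / 2) (by positivity)
    obtain ⟨δ, hδ, h⟩ := this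
    exact ⟨δ, hδ, fun x hx y hy hxy => h x hx y hy hxy⟩
  obtain ⟨N, hN⟩ := exists_nat_gt (δ⁻¹)
  refine ⟨max N 1, fun K hK => ?_⟩
  have hK1 : 1 ≤ K := le_trans (le_max_right _ _) hK
  have hKpos : (0:ℝ) < K := by exact_mod_cast hK1
  have hKδ : (K:ℝ)⁻¹ ≤ δ := by
    rw [inv_le_comm₀ hKpos hδ]
    calc δ⁻¹ ≤ N := le_of_lt hN
      _ ≤ K := by exact_mod_cast le_trans (le_max_left _ _) hK
  -- split the integral
  have hint : ∀ (a b : ℝ), IntervalIntegrable f volume a b := fun a b =>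
    hf.intervalIntegrable a b
  have hsplit : ∫ t in (0:ℝ)..1, f t
      = ∑ j ∈ Finset.range K, ∫ t in ((j:ℝ)/K)..(((j:ℝ)+1)/K), f t := by
    have := intervalIntegral.sum_integral_adjacent_intervals
      (a := fun i : ℕ => (i:ℝ)/K) (μ := volume) (n := K) (fun i _ => hint _ _)
    simp only [Nat.cast_zero, zero_div] at this
    rw [div_self (ne_of_gt hKpos)] at this
    rw [← this]
    exact Finset.sum_congr rfl (fun j _ => by push_cast; ring_nf)
  have hsum : ∑ k ∈ Finset.Icc 1 K, (K : ℝ)⁻¹ * f (k / K)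
      = ∑ j ∈ Finset.range K, (K : ℝ)⁻¹ * f (((j:ℝ)+1) / K) := by
    rw [← Finset.Ico_add_one_right_eq_Icc, Finset.sum_Ico_eq_sum_range]
    refine Finset.sum_congr (by norm_num) (fun j _ => by push_cast; ring_nf)
  rw [dist_eq_norm, hsum, hsplit, ← Finset.sum_sub_distrib]
  have hterm : ∀ j ∈ Finset.range K,
      ‖(K : ℝ)⁻¹ * f (((j:ℝ)+1) / K) - ∫ t in ((j:ℝ)/K)..(((j:ℝ)+1)/K), f t‖
        ≤ (ε / 2) * (K:ℝ)⁻¹ := by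
    intro j hj
    have hjK : (j:ℝ) + 1 ≤ K := by
      have := Finset.mem_range.1 hj
      exact_mod_cast Nat.succ_le_of_lt this
    have hab : (j:ℝ)/K ≤ ((j:ℝ)+1)/K := by
      apply (div_le_div_iff_of_pos_right hKpos).2; linarith
    have hconst : (K : ℝ)⁻¹ * f (((j:ℝ)+1) / K)
        = ∫ t in ((j:ℝ)/K)..(((j:ℝ)+1)/K), f (((j:ℝ)+1) / K) := by
      rw [intervalIntegral.integral_const, smul_eq_mul]
      congr 1
      field_simp
      ring
    rw [hconst, ← intervalIntegral.integral_sub intervalIntegrable_const (hint _ _)]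
    have := intervalIntegral.norm_integral_le_of_norm_le_const
      (C := ε / 2) (f := fun t => f (((j:ℝ)+1) / K) - f t)
      (a := (j:ℝ)/K) (b := ((j:ℝ)+1)/K) ?_
    · refine le_trans this (le_of_eq ?_)
      congr 1
      rw [abs_of_nonneg (by linarith)]
      field_simp
      ring
    · intro t ht
      rw [Set.uIoc_of_le hab] at ht
      obtain ⟨ht1, ht2⟩ := ht
      have htmem : t ∈ Set.Icc (0:ℝ) 1 := by
        constructor
        · have : (0:ℝ) ≤ (j:ℝ)/K := div_nonneg (Nat.cast_nonneg j) (le_of_lt hKpos)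
          linarith
        · calc t ≤ ((j:ℝ)+1)/K := ht2
            _ ≤ 1 := by rw [div_le_one hKpos]; exact hjK
      have hjmem : ((j:ℝ)+1)/K ∈ Set.Icc (0:ℝ) 1 := by
        constructor
        · positivity
        · rw [div_le_one hKpos]; exact hjK
      have hd : dist (((j:ℝ)+1)/K) t ≤ δ := by
        rw [Real.dist_eq, abs_of_nonneg (by linarith)]
        have : ((j:ℝ)+1)/K - t ≤ ((j:ℝ)+1)/K - (j:ℝ)/K := by linarith
        refine le_trans this (le_trans (le_of_eq ?_) hKδ)
        field_simp
        ring
      simpa [Real.norm_eq_abs, Real.dist_eq] using hunif _ hjmem _ htmem hd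
  calc ‖∑ j ∈ Finset.range K, ((K : ℝ)⁻¹ * f (((j:ℝ)+1) / K)
          - ∫ t in ((j:ℝ)/K)..(((j:ℝ)+1)/K), f t)‖
      ≤ ∑ j ∈ Finset.range K, (ε / 2) * (K:ℝ)⁻¹ := norm_sum_le_of_le _ hterm
    _ = K * ((ε / 2) * (K:ℝ)⁻¹) := by rw [Finset.sum_const, Finset.card_range]; ring
    _ = ε / 2 := by field_simp
    _ < ε := by linarith
open MeasureTheory

private noncomputable def Qform (lam mu : ℝ) {d : ℕ} (B : Fin d → Fin d → ℝ) : ℝ :=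
  lam / 2 * (∑ i, B i i) ^ 2
    + mu * ∑ i, ∑ k, ((B i k + B k i) / 2) * ((B k i + B i k) / 2)

private lemma Qform_smul (lam mu : ℝ) {d : ℕ} (c : ℝ) (B : Fin d → Fin d → ℝ) :
    Qform lam mu (c • B) = c ^ 2 * Qform lam mu B := by
  have h1 : ∀ i k : Fin d, (((c • B) i k + (c • B) k i) / 2) * (((c • B) k i + (c • B) i k) / 2)
      = c ^ 2 * (((B i k + B k i) / 2) * ((B k i + B i k) / 2)) := by
    intro i k
    simp only [Pi.smul_apply, smul_eq_mul]
    ring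
  have h2 : ∀ i : Fin d, (c • B) i i = c * B i i := fun i => rfl
  simp only [Qform]
  simp_rw [h1, h2, ← Finset.mul_sum]
  ring

set_option maxHeartbeats 1000000 in
/-- **Consistency of the discrete dissipation cost.**  Let `W` be a `C²` hyperelastic
energy density with `W(Id) = 0`, `DW(Id) = 0` and
`(1/2)·D²W(Id)(B,B) = (λ/2)(tr B)² + μ·tr(((B+Bᵀ)/2)²)`.  For smooth velocities `v`
with Jacobian `G`, setting `φ_k^K = (1/K)·v(k/K) + Id`, the discrete dissipation
`K·Σ_{k=1}^K ∫_D W(Dφ_k^K) + ε|D^m φ_k^K|² dx` converges to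
`∫₀¹∫_D (λ/2)(tr Dv)² + μ·tr(ε[v]²) + ε|D^m v|² dx dt`. -/
theorem discrete_dissipation_consistency {d : ℕ}
    (D : Set (EuclideanSpace ℝ (Fin d))) (hDconv : Convex ℝ D)
    (hDopen : IsOpen D) (hDbdd : Bornology.IsBounded D)
    (m : ℕ) (hm : 1 + (d : ℝ) / 2 < m)
    (lam mu eps : ℝ) (hlam : 0 < lam) (hmu : 0 < mu) (heps : 0 < eps)
    (W : (Fin d → Fin d → ℝ) → ℝ) (hW : ContDiff ℝ 2 W)
    (hWid : W (fun i j => if i = j then 1 else 0) = 0)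
    (hDWid : fderiv ℝ W (fun i j => if i = j then 1 else 0) = 0)
    (hD2Wid : ∀ B : Fin d → Fin d → ℝ,
      (iteratedFDeriv ℝ 2 W (fun i j => if i = j then 1 else 0)) ![B, B]
        = lam * (∑ i, B i i) ^ 2
          + 2 * mu * ∑ i, ∑ k, ((B i k + B k i) / 2) * ((B k i + B i k) / 2))
    (v : ℝ → EuclideanSpace ℝ (Fin d) → EuclideanSpace ℝ (Fin d))
    (hv : ContDiff ℝ (⊤ : ℕ∞) fun p : ℝ × EuclideanSpace ℝ (Fin d) => v p.1 p.2)
    (G : ℝ → EuclideanSpace ℝ (Fin d) → Fin d → Fin d → ℝ)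
    (hG : ∀ t x i j, G t x i j = (fderiv ℝ (v t) x (EuclideanSpace.single j 1)) i) :
    Filter.Tendsto
      (fun K : ℕ =>
        (K : ℝ) * ∑ k ∈ Finset.Icc 1 K,
          ∫ x in D,
            (W (fun i j => (if i = j then (1:ℝ) else 0) + (K : ℝ)⁻¹ * G ((k : ℝ) / K) x i j)
              + eps * ‖iteratedFDeriv ℝ m
                  (fun y => y + (K : ℝ)⁻¹ • v ((k : ℝ) / K) y) x‖ ^ 2))
      Filter.atTop
      (nhds (∫ t in (0:ℝ)..1, ∫ x in D,
        (lam / 2 * (∑ i, G t x i i) ^ 2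
          + mu * ∑ i, ∑ k, ((G t x i k + G t x k i) / 2) * ((G t x k i + G t x i k) / 2)
          + eps * ‖iteratedFDeriv ℝ m (v t) x‖ ^ 2))) := by
  set Id2 : Fin d → Fin d → ℝ := fun i j => if i = j then 1 else 0 with hId2
  -- basic facts
  have hm2 : 2 ≤ m := by
    have h0 : (0:ℝ) ≤ (d:ℝ)/2 := by positivity
    have h1 : (1:ℝ) < m := by linarith
    have h2 : 1 < m := by exact_mod_cast h1
    omega
  have hv' : ContDiff ℝ ((⊤:ℕ∞) : WithTop ℕ∞) (fun p : ℝ × EuclideanSpace ℝ (Fin d) => v p.1 p.2) :=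
    hv.of_le (by simp)
  have hvt : ∀ (t : ℝ) (n : ℕ∞), ContDiff ℝ n (v t) := by
    intro t n
    exact ((hv'.of_le (WithTop.coe_le_coe.2 le_top)).comp
      ((contDiff_const).prodMk contDiff_id) : ContDiff ℝ n _)
  -- joint continuity of G
  have hfd : Continuous (fun p : ℝ × EuclideanSpace ℝ (Fin d) => fderiv ℝ (v p.1) p.2) := by
    have : ContDiff ℝ ((⊤:ℕ∞) : WithTop ℕ∞)
        (fun p : ℝ × EuclideanSpace ℝ (Fin d) => fderiv ℝ (v p.1) p.2) := by
      apply ContDiff.fderiv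
        (f := fun (p : ℝ × EuclideanSpace ℝ (Fin d)) (y : EuclideanSpace ℝ (Fin d)) => v p.1 y)
        (g := fun p : ℝ × EuclideanSpace ℝ (Fin d) => p.2)
      · exact hv'.comp ((contDiff_fst.fst).prodMk contDiff_snd)
      · exact contDiff_snd
      · exact le_of_eq (by simp)
    exact this.continuous
  have hGc : Continuous (fun p : ℝ × EuclideanSpace ℝ (Fin d) => G p.1 p.2) := by
    have hrw : (fun p : ℝ × EuclideanSpace ℝ (Fin d) => G p.1 p.2)
        = fun p => (fun i j => ((fderiv ℝ (v p.1) p.2) (EuclideanSpace.single j 1)) i) := by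
      funext p
      exact funext fun i => funext fun j => hG p.1 p.2 i j
    rw [hrw]
    refine continuous_pi fun i => continuous_pi fun j => ?_
    exact ((EuclideanSpace.proj i).continuous).comp
      (((ContinuousLinearMap.apply ℝ (EuclideanSpace ℝ (Fin d))
        (EuclideanSpace.single j 1)).continuous).comp hfd)
  have hentry : ∀ i j : Fin d, Continuous fun p : ℝ × EuclideanSpace ℝ (Fin d) => G p.1 p.2 i j :=
    fun i j => (continuous_apply j).comp ((continuous_apply i).comp hGc)
  have hQc : Continuous (fun p : ℝ × EuclideanSpace ℝ (Fin d) => Qform lam mu (G p.1 p.2)) := by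
    simp only [Qform]
    refine Continuous.add (continuous_const.mul ?_) (continuous_const.mul ?_)
    · exact (continuous_finset_sum _ fun i _ => hentry i i).pow 2
    · exact continuous_finset_sum _ fun i _ => continuous_finset_sum _ fun k _ =>
        ((((hentry i k).add (hentry k i)).div_const 2).mul
          (((hentry k i).add (hentry i k)).div_const 2))
  -- joint continuity of the m-th derivative
  have hDm : Continuous (fun p : ℝ × EuclideanSpace ℝ (Fin d) => iteratedFDeriv ℝ m (v p.1) p.2) :=
    (contDiff_parametric_iteratedFDeriv hv' m).continuous
  -- compactness facts
  have hDclosure : IsCompact (closure D) :=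
    Metric.isCompact_of_isClosed_isBounded isClosed_closure hDbdd.closure
  have hDfin : volume D < ⊤ := hDbdd.measure_lt_top
  have hint : ∀ u : EuclideanSpace ℝ (Fin d) → ℝ, Continuous u → IntegrableOn u D volume := fun u hu =>
    (hu.continuousOn.integrableOn_compact hDclosure).mono_set subset_closure
  -- the limit dissipation integrand
  set g : ℝ × EuclideanSpace ℝ (Fin d) → ℝ :=
    fun p => Qform lam mu (G p.1 p.2) + eps * ‖iteratedFDeriv ℝ m (v p.1) p.2‖ ^ 2 with hg
  have hgc : Continuous g := by
    exact hQc.add (continuous_const.mul ((hDm.norm).pow 2))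
  set f : ℝ → ℝ := fun t => ∫ x in D, g (t, x) with hf
  have hfc : Continuous f := by
    rw [continuous_iff_continuousAt]
    intro t₀
    obtain ⟨C, hC⟩ := ((isCompact_Icc : IsCompact (Set.Icc (t₀-1) (t₀+1))).prod
      hDclosure).exists_bound_of_continuousOn hgc.continuousOn
    apply MeasureTheory.continuousAt_of_dominated (bound := fun _ => C)
    · exact Filter.Eventually.of_forall fun t =>
        (hgc.comp (Continuous.prodMk_right t)).aestronglyMeasurable
    · filter_upwards [Metric.ball_mem_nhds t₀ one_pos] with t ht
      filter_upwards [ae_restrict_mem hDopen.measurableSet] with x hx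
      refine hC (t, x) ⟨?_, subset_closure hx⟩
      rw [Metric.mem_ball, Real.dist_eq] at ht
      have h1 := abs_lt.1 ht
      exact ⟨by linarith [h1.1], by linarith [h1.2]⟩
    · exact integrableOn_const hDfin.ne
    · exact Filter.Eventually.of_forall fun x =>
        (hgc.comp (continuous_id.prodMk continuous_const)).continuousAt
  -- uniform bound on G
  obtain ⟨MG, hMG0, hMG⟩ : ∃ MG : ℝ, 0 ≤ MG ∧
      ∀ t ∈ Set.Icc (0:ℝ) 1, ∀ x ∈ closure D, ‖G t x‖ ≤ MG := by
    obtain ⟨C, hC⟩ := ((isCompact_Icc : IsCompact (Set.Icc (0:ℝ) 1)).prod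
      hDclosure).exists_bound_of_continuousOn hGc.continuousOn
    exact ⟨max C 0, le_max_right _ _, fun t ht x hx =>
      le_trans (hC (t, x) ⟨ht, hx⟩) (le_max_left _ _)⟩
  -- Taylor expansion of W at the identity
  have htaylor : ∀ ε₀ > 0, ∃ δ > 0, ∀ B : Fin d → Fin d → ℝ, ‖B‖ ≤ δ →
      |W (Id2 + B) - Qform lam mu B| ≤ ε₀ * ‖B‖ ^ 2 := by
    intro ε₀ hε₀
    obtain ⟨δ, hδ, htb⟩ := taylor2_aux hW Id2 hWid hDWid hε₀
    refine ⟨δ, hδ, fun B hB => ?_⟩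
    have h2 : fderiv ℝ (fderiv ℝ W) Id2 B B = iteratedFDeriv ℝ 2 W Id2 ![B, B] := by
      rw [iteratedFDeriv_two_apply]
      simp
    have h3 : (1/2 : ℝ) * (fderiv ℝ (fderiv ℝ W) Id2 B B) = Qform lam mu B := by
      rw [h2, hD2Wid B]
      simp only [Qform]
      ring
    have h4 := htb B hB
    rw [h3] at h4
    exact h4
  -- the error terms
  set e : ℕ → ℕ → ℝ := fun K k =>
    ∫ x in D, ((K:ℝ)^2 * W (fun i j => Id2 i j + (K : ℝ)⁻¹ * G ((k : ℝ) / K) x i j)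
      - Qform lam mu (G ((k : ℝ) / K) x)) with he
  -- decomposition of the discrete dissipation
  have hdecomp : ∀ K : ℕ, 1 ≤ K →
      ((K : ℝ) * ∑ k ∈ Finset.Icc 1 K,
          ∫ x in D,
            (W (fun i j => Id2 i j + (K : ℝ)⁻¹ * G ((k : ℝ) / K) x i j)
              + eps * ‖iteratedFDeriv ℝ m
                  (fun y => y + (K : ℝ)⁻¹ • v ((k : ℝ) / K) y) x‖ ^ 2))
        = (∑ k ∈ Finset.Icc 1 K, (K : ℝ)⁻¹ * f ((k : ℝ) / K))
          + ∑ k ∈ Finset.Icc 1 K, (K : ℝ)⁻¹ * e K k := by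
    intro K hK
    have hKpos : (0:ℝ) < K := by exact_mod_cast hK
    have hKne : (K:ℝ) ≠ 0 := ne_of_gt hKpos
    rw [Finset.mul_sum, ← Finset.sum_add_distrib]
    refine Finset.sum_congr rfl fun k hk => ?_
    set t : ℝ := (k:ℝ)/K with hts
    -- continuity facts in x for this fixed t
    have hGx : Continuous fun x : EuclideanSpace ℝ (Fin d) => G t x :=
      hGc.comp (Continuous.prodMk_right t)
    have hWA : Continuous fun x : EuclideanSpace ℝ (Fin d) =>
        W (fun i j => Id2 i j + (K : ℝ)⁻¹ * G t x i j) := by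
      refine hW.continuous.comp (continuous_pi fun i => continuous_pi fun j => ?_)
      exact continuous_const.add (continuous_const.mul
        ((continuous_apply j).comp ((continuous_apply i).comp hGx)))
    have hQx : Continuous fun x : EuclideanSpace ℝ (Fin d) => Qform lam mu (G t x) :=
      hQc.comp (Continuous.prodMk_right t)
    have hnx : Continuous fun x : EuclideanSpace ℝ (Fin d) =>
        ‖iteratedFDeriv ℝ m (v t) x‖ ^ 2 :=
      ((hDm.comp (Continuous.prodMk_right t)).norm).pow 2
    -- rewrite the m-th derivative of the perturbed map
    have hn : ∀ x : EuclideanSpace ℝ (Fin d),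
        ‖iteratedFDeriv ℝ m (fun y => y + (K : ℝ)⁻¹ • v t y) x‖ ^ 2
          = ((K:ℝ)⁻¹)^2 * ‖iteratedFDeriv ℝ m (v t) x‖ ^ 2 := by
      intro x
      rw [iteratedFDeriv_id_add (hvt t m) hm2, norm_smul]
      rw [Real.norm_eq_abs, abs_of_nonneg (inv_nonneg.2 hKpos.le)]
      ring
    have hstep1 : (fun x : EuclideanSpace ℝ (Fin d) =>
          (K:ℝ)^2 * (W (fun i j => Id2 i j + (K : ℝ)⁻¹ * G t x i j)
            + eps * ‖iteratedFDeriv ℝ m (fun y => y + (K : ℝ)⁻¹ • v t y) x‖ ^ 2))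
        = fun x => (Qform lam mu (G t x) + eps * ‖iteratedFDeriv ℝ m (v t) x‖ ^ 2)
            + ((K:ℝ)^2 * W (fun i j => Id2 i j + (K : ℝ)⁻¹ * G t x i j)
              - Qform lam mu (G t x)) := by
      funext x
      rw [hn x]
      field_simp
      ring
    calc (K : ℝ) * ∫ x in D,
            (W (fun i j => Id2 i j + (K : ℝ)⁻¹ * G t x i j)
              + eps * ‖iteratedFDeriv ℝ m (fun y => y + (K : ℝ)⁻¹ • v t y) x‖ ^ 2)
        = (K : ℝ)⁻¹ * ∫ x in D,
            (K:ℝ)^2 * (W (fun i j => Id2 i j + (K : ℝ)⁻¹ * G t x i j)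
              + eps * ‖iteratedFDeriv ℝ m (fun y => y + (K : ℝ)⁻¹ • v t y) x‖ ^ 2) := by
          rw [MeasureTheory.integral_const_mul]
          field_simp
      _ = (K : ℝ)⁻¹ * ∫ x in D,
            ((Qform lam mu (G t x) + eps * ‖iteratedFDeriv ℝ m (v t) x‖ ^ 2)
              + ((K:ℝ)^2 * W (fun i j => Id2 i j + (K : ℝ)⁻¹ * G t x i j)
                - Qform lam mu (G t x))) := by rw [hstep1]
      _ = (K : ℝ)⁻¹ * (f t + e K k) := by
          rw [MeasureTheory.integral_add (hint (fun x => Qform lam mu (G t x) + eps * ‖iteratedFDeriv ℝ m (v t) x‖ ^ 2) (hQx.add (continuous_const.mul hnx)))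
            (hint (fun x => (K:ℝ)^2 * W (fun i j => Id2 i j + (K : ℝ)⁻¹ * G t x i j) - Qform lam mu (G t x)) (((continuous_const.mul hWA)).sub hQx))]
      _ = (K : ℝ)⁻¹ * f t + (K : ℝ)⁻¹ * e K k := by ring
  -- error terms tend to zero
  have herr : Filter.Tendsto (fun K : ℕ => ∑ k ∈ Finset.Icc 1 K, (K : ℝ)⁻¹ * e K k)
      Filter.atTop (nhds 0) := by
    rw [Metric.tendsto_atTop]
    intro ε' hε'
    set Cv : ℝ := (volume D).toReal with hCv
    have hCv0 : 0 ≤ Cv := ENNReal.toReal_nonneg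
    set ε₀ : ℝ := ε' / (2 * (MG^2 + 1) * (Cv + 1)) with hε₀def
    have hε₀ : 0 < ε₀ := by positivity
    obtain ⟨δ, hδ, htb⟩ := htaylor ε₀ hε₀
    obtain ⟨N, hN⟩ := exists_nat_gt (MG / δ)
    refine ⟨max N 1, fun K hK => ?_⟩
    have hK1 : 1 ≤ K := le_trans (le_max_right _ _) hK
    have hKpos : (0:ℝ) < K := by exact_mod_cast hK1
    have hKMδ : (K:ℝ)⁻¹ * MG ≤ δ := by
      have hNK : MG / δ < K := by
        calc MG / δ < N := hN
          _ ≤ K := by exact_mod_cast le_trans (le_max_left _ _) hK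
      rw [div_lt_iff₀ hδ] at hNK
      have h7 : MG ≤ (K:ℝ) * δ := le_of_lt hNK
      calc (K:ℝ)⁻¹ * MG ≤ (K:ℝ)⁻¹ * ((K:ℝ) * δ) :=
            mul_le_mul_of_nonneg_left h7 (by positivity)
        _ = δ := by field_simp
    have hek : ∀ k ∈ Finset.Icc 1 K, |e K k| ≤ ε₀ * MG^2 * Cv := by
      intro k hk
      obtain ⟨hk1, hk2⟩ := Finset.mem_Icc.1 hk
      set t : ℝ := (k:ℝ)/K with hts
      have ht01 : t ∈ Set.Icc (0:ℝ) 1 :=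
        ⟨by positivity, by rw [hts, div_le_one hKpos]; exact_mod_cast hk2⟩
      have hpt : ∀ x ∈ D,
          ‖(K:ℝ)^2 * W (fun i j => Id2 i j + (K : ℝ)⁻¹ * G t x i j)
            - Qform lam mu (G t x)‖ ≤ ε₀ * MG^2 := by
        intro x hx
        set Bm : Fin d → Fin d → ℝ := (K:ℝ)⁻¹ • G t x with hBm
        have hGle : ‖G t x‖ ≤ MG := hMG t ht01 x (subset_closure hx)
        have hGn : 0 ≤ ‖G t x‖ := norm_nonneg _
        have hBnorm : ‖Bm‖ = (K:ℝ)⁻¹ * ‖G t x‖ := by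
          rw [hBm, norm_smul, Real.norm_eq_abs, abs_of_nonneg (inv_nonneg.2 hKpos.le)]
        have hBδ : ‖Bm‖ ≤ δ := by
          rw [hBnorm]
          calc (K:ℝ)⁻¹ * ‖G t x‖ ≤ (K:ℝ)⁻¹ * MG := by
                exact mul_le_mul_of_nonneg_left hGle (inv_nonneg.2 hKpos.le)
            _ ≤ δ := hKMδ
        have harg : (fun i j => Id2 i j + (K : ℝ)⁻¹ * G t x i j) = Id2 + Bm := by
          funext i j
          simp [hBm]
        have h4 := htb Bm hBδ
        have h5 : Qform lam mu (G t x) = (K:ℝ)^2 * Qform lam mu Bm := by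
          rw [hBm, Qform_smul]
          field_simp
        rw [harg, h5, ← mul_sub, Real.norm_eq_abs, abs_mul, abs_of_nonneg (by positivity :
          (0:ℝ) ≤ (K:ℝ)^2)]
        calc (K:ℝ)^2 * |W (Id2 + Bm) - Qform lam mu Bm|
            ≤ (K:ℝ)^2 * (ε₀ * ‖Bm‖^2) := by
              exact mul_le_mul_of_nonneg_left h4 (by positivity)
          _ ≤ ε₀ * MG^2 := by
              rw [hBnorm]
              have h6 : ((K:ℝ)⁻¹ * ‖G t x‖)^2 ≤ ((K:ℝ)⁻¹ * MG)^2 := by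
                have h7 : (K:ℝ)⁻¹ * ‖G t x‖ ≤ (K:ℝ)⁻¹ * MG :=
                  mul_le_mul_of_nonneg_left hGle (inv_nonneg.2 hKpos.le)
                nlinarith [mul_nonneg (inv_nonneg.2 hKpos.le) hGn]
              calc (K:ℝ)^2 * (ε₀ * ((K:ℝ)⁻¹ * ‖G t x‖)^2)
                  ≤ (K:ℝ)^2 * (ε₀ * ((K:ℝ)⁻¹ * MG)^2) := by
                    exact mul_le_mul_of_nonneg_left
                      (mul_le_mul_of_nonneg_left h6 hε₀.le) (by positivity)
                _ = ε₀ * MG^2 := by field_simp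
      have hcont : Continuous fun x : EuclideanSpace ℝ (Fin d) =>
          (K:ℝ)^2 * W (fun i j => Id2 i j + (K : ℝ)⁻¹ * G t x i j)
            - Qform lam mu (G t x) := by
        have hGx : Continuous fun x : EuclideanSpace ℝ (Fin d) => G t x :=
          hGc.comp (Continuous.prodMk_right t)
        refine Continuous.sub (continuous_const.mul ?_) (hQc.comp (Continuous.prodMk_right t))
        refine hW.continuous.comp (continuous_pi fun i => continuous_pi fun j => ?_)
        exact continuous_const.add (continuous_const.mul
          ((continuous_apply j).comp ((continuous_apply i).comp hGx)))
      have := norm_setIntegral_le_of_norm_le_const (μ := volume) hDfin hpt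
      calc |e K k| ≤ (ε₀ * MG^2) * Cv := by
            rw [he]
            exact this
        _ = ε₀ * MG^2 * Cv := by ring
    rw [Real.dist_eq, sub_zero]
    have habs : |∑ k ∈ Finset.Icc 1 K, (K : ℝ)⁻¹ * e K k| ≤ ε₀ * MG^2 * Cv := by
      calc |∑ k ∈ Finset.Icc 1 K, (K : ℝ)⁻¹ * e K k|
          ≤ ∑ k ∈ Finset.Icc 1 K, |(K : ℝ)⁻¹ * e K k| := Finset.abs_sum_le_sum_abs _ _
        _ ≤ ∑ k ∈ Finset.Icc 1 K, (K : ℝ)⁻¹ * (ε₀ * MG^2 * Cv) := by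
            refine Finset.sum_le_sum fun k hk => ?_
            rw [abs_mul, abs_of_nonneg (inv_nonneg.2 hKpos.le)]
            exact mul_le_mul_of_nonneg_left (hek k hk) (inv_nonneg.2 hKpos.le)
        _ = (K:ℝ) * ((K : ℝ)⁻¹ * (ε₀ * MG^2 * Cv)) := by
            rw [Finset.sum_const, Nat.card_Icc]
            simp
        _ = ε₀ * MG^2 * Cv := by field_simp
    refine lt_of_le_of_lt habs ?_
    have h2 : ε₀ * (MG^2 * Cv) < ε₀ * (2 * (MG^2+1) * (Cv+1)) := by
      apply mul_lt_mul_of_pos_left _ hε₀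
      nlinarith
    have h3 : ε₀ * (2 * (MG^2+1) * (Cv+1)) = ε' := by
      rw [hε₀def]; field_simp
    calc ε₀ * MG^2 * Cv = ε₀ * (MG^2 * Cv) := by ring
      _ < ε₀ * (2 * (MG^2+1) * (Cv+1)) := h2
      _ = ε' := h3
  -- Riemann sums
  have hS := riemann_sum_tendsto hfc
  have hfinal := hS.add herr
  rw [add_zero] at hfinal
  refine (hfinal.congr' ?_ : _)
  filter_upwards [Filter.eventually_ge_atTop 1] with K hK
  exact (hdecomp K hK).symm
end

section
/- For smooth u, v on [0,1]×D, with u_k^K = u(k/K), v_k^K = v(k/K), φ_k^K = (1/K)v_k^K + Id, the discrete source cost K·Σ_{k=1}^K ∫_D |det(Dφ_k^K)·(u_k^K ∘ φ_k^K) − u_{k−1}^K|² dx converges as K → ∞ to ∫₀¹∫_D |∂_t u + div(u v)|² dx dt. -/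
open MeasureTheory Filter Polynomial

private lemma myContDiff_prod {E' : Type*} [NormedAddCommGroup E'] [NormedSpace ℝ E']
    {ι : Type*} {f : ι → E' → ℝ} (s : Finset ι) (h : ∀ i ∈ s, ContDiff ℝ (⊤ : ℕ∞) (f i)) :
    ContDiff ℝ (⊤ : ℕ∞) fun x => ∏ i ∈ s, f i x := by
  classical
  induction s using Finset.induction_on with
  | empty => simpa using contDiff_const
  | @insert a s ha ih =>
    simp only [Finset.prod_insert ha]
    exact (h a (Finset.mem_insert_self a s)).mul (ih fun i hi => h i (Finset.mem_insert_of_mem hi))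

/-- the determinant function `(h, m) ↦ det (1 + h • m)` on plain function matrices. -/
noncomputable def detF (d : ℕ) : ℝ × (Fin d → Fin d → ℝ) → ℝ :=
  fun p => Matrix.det (1 + p.1 • Matrix.of p.2)

private lemma detF_contDiff (d : ℕ) : ContDiff ℝ (⊤ : ℕ∞) (detF d) := by
  have key : detF d = fun p => ∑ σ : Equiv.Perm (Fin d), ((Equiv.Perm.sign σ : ℤ) : ℝ) *
          ∏ i, ((1 : Matrix (Fin d) (Fin d) ℝ) (σ i) i + p.1 * p.2 (σ i) i) := by
    funext p
    rw [detF, Matrix.det_apply']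
    refine Finset.sum_congr rfl fun σ _ => ?_
    refine congrArg _ (Finset.prod_congr rfl fun i _ => ?_)
    simp [Matrix.add_apply, Matrix.smul_apply, smul_eq_mul]
  rw [key]
  apply ContDiff.sum
  intro σ _
  apply contDiff_const.mul
  apply myContDiff_prod
  intro i _
  have h2 : ContDiff ℝ (⊤ : ℕ∞) (fun p : ℝ × (Fin d → Fin d → ℝ) => p.2 (σ i) i) :=
    contDiff_pi.mp (contDiff_pi.mp contDiff_snd (σ i)) i
  exact contDiff_const.add (contDiff_fst.mul h2)

private lemma detF_hasDerivAt_zero {d : ℕ} (m : Fin d → Fin d → ℝ) :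
    HasDerivAt (fun h : ℝ => detF d (h, m)) (Matrix.trace (Matrix.of m)) 0 := by
  set M := Matrix.of m
  have hfun : (fun h : ℝ => detF d (h, m))
      = fun h => 1 + Matrix.trace M * h +
          Polynomial.eval h (Matrix.det (1 + (X : ℝ[X]) • M.map C)).divX.divX * h ^ 2 := by
    funext h
    exact Matrix.det_one_add_smul h M
  rw [hfun]
  set Q := (Matrix.det (1 + (X : ℝ[X]) • M.map C)).divX.divX
  have h1 : HasDerivAt (fun h : ℝ => (1 : ℝ) + Matrix.trace M * h) (Matrix.trace M) 0 := by
    exact ((hasDerivAt_const (0:ℝ) (1:ℝ)).add ((hasDerivAt_id (0:ℝ)).const_mul (Matrix.trace M))).congr_deriv (by simp)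
  have h2 : HasDerivAt (fun h : ℝ => Polynomial.eval h Q * h ^ 2) 0 0 := by
    exact ((Q.hasDerivAt (0:ℝ)).mul (hasDerivAt_pow 2 (0:ℝ))).congr_deriv (by simp)
  exact (h1.add h2).congr_deriv (by simp)

private lemma riemann_param (g : ℝ → ℝ → ℝ) (hg : Continuous fun p : ℝ × ℝ => g p.1 p.2) :
    Tendsto (fun K : ℕ => (K : ℝ)⁻¹ * ∑ k ∈ Finset.Icc 1 K, g (K : ℝ)⁻¹ ((k : ℝ) / K))
      atTop (nhds (∫ t in (0:ℝ)..1, g 0 t)) := by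
  set F : ℕ → ℝ → ℝ := fun K t => g (K : ℝ)⁻¹ ((⌈(K : ℝ) * t⌉₊ : ℝ) / K) with hFdef
  -- Step A : for K ≥ 1, the integral of the step function is the Riemann sum
  have stepA : ∀ K : ℕ, 1 ≤ K →
      ∫ t in Set.Ioc (0:ℝ) 1, F K t
        = (K : ℝ)⁻¹ * ∑ k ∈ Finset.Icc 1 K, g (K : ℝ)⁻¹ ((k : ℝ) / K) := by
    intro K hK
    have hKpos : (0:ℝ) < K := by exact_mod_cast hK
    have hKne : (K:ℝ) ≠ 0 := ne_of_gt hKpos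
    set c : ℕ → ℝ := fun i => (i : ℝ) / K with hc
    have hle : ∀ i : ℕ, c i ≤ c (i + 1) := by
      intro i
      rw [hc, div_le_div_iff_of_pos_right hKpos]
      push_cast; linarith
    have heq : ∀ i : ℕ, Set.EqOn (F K) (fun _ => g (K:ℝ)⁻¹ ((i + 1 : ℝ) / K))
        (Set.Ioc (c i) (c (i+1))) := by
      intro i t ht
      have h1 : (i : ℝ) < (K:ℝ) * t := by
        rw [hc] at ht
        have := ht.1
        rw [div_lt_iff₀ hKpos] at this
        linarith [this]
      have h2 : (K:ℝ) * t ≤ (i : ℝ) + 1 := by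
        have := ht.2
        rw [hc, le_div_iff₀ hKpos] at this
        push_cast at this
        linarith
      have hceil : ⌈(K:ℝ) * t⌉₊ = i + 1 := by
        rw [Nat.ceil_eq_iff (Nat.succ_ne_zero i)]
        constructor
        · simpa using h1
        · push_cast; exact h2
      simp only [hFdef, hceil]
      push_cast
      rfl
    have hInt : ∀ i : ℕ, i < K → IntervalIntegrable (F K) volume (c i) (c (i+1)) := by
      intro i _
      rw [intervalIntegrable_iff_integrableOn_Ioc_of_le (hle i)]
      exact (integrableOn_const measure_Ioc_lt_top.ne).congr_fun (heq i).symm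
        measurableSet_Ioc |>.congr_fun (fun x hx => rfl) measurableSet_Ioc
    have hval : ∀ i : ℕ, ∫ t in (c i)..(c (i+1)), F K t
        = (K : ℝ)⁻¹ * g (K:ℝ)⁻¹ ((i + 1 : ℝ) / K) := by
      intro i
      rw [intervalIntegral.integral_of_le (hle i),
        setIntegral_congr_fun measurableSet_Ioc (heq i), setIntegral_const,
        measureReal_def, Real.volume_Ioc, smul_eq_mul]
      congr 1
      rw [ENNReal.toReal_ofReal (by linarith [hle i])]
      rw [hc]; push_cast; field_simp; ring
    have hsum := intervalIntegral.sum_integral_adjacent_intervals (μ := volume)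
      (f := F K) (a := c) (n := K) hInt
    have hc0 : c 0 = 0 := by simp [hc]
    have hcK : c K = 1 := by rw [hc]; field_simp
    rw [hc0, hcK] at hsum
    have : ∫ t in Set.Ioc (0:ℝ) 1, F K t = ∑ i ∈ Finset.range K, ∫ t in (c i)..(c (i+1)), F K t := by
      rw [hsum, intervalIntegral.integral_of_le zero_le_one]
    rw [this, Finset.mul_sum, ← Finset.Ico_add_one_right_eq_Icc, Finset.sum_Ico_eq_sum_range]
    simp only [Nat.add_sub_cancel_left, Nat.succ_sub_one, Nat.add_sub_cancel]
    refine Finset.sum_congr rfl fun i _ => ?_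
    rw [hval i]
    congr 2
    push_cast
    ring
  -- bound
  obtain ⟨M, hM⟩ := (isCompact_Icc.prod (isCompact_Icc (a := (0:ℝ)) (b := 1))).exists_bound_of_continuousOn
      hg.continuousOn
  -- Step B : dominated convergence
  have stepB : Tendsto (fun K : ℕ => ∫ t in Set.Ioc (0:ℝ) 1, F K t) atTop
      (nhds (∫ t in Set.Ioc (0:ℝ) 1, g 0 t)) := by
    apply tendsto_integral_filter_of_dominated_convergence (fun _ => M)
    · filter_upwards with K
      have : Measurable (F K) := by
        have h1 : Measurable fun t : ℝ => ⌈(K:ℝ) * t⌉₊ :=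
          Nat.measurable_ceil.comp (measurable_id.const_mul _)
        exact (measurable_of_countable fun n : ℕ => g (K:ℝ)⁻¹ ((n : ℝ)/K)).comp h1
      exact this.aestronglyMeasurable
    · filter_upwards [eventually_ge_atTop 1] with K hK
      have hKpos : (0:ℝ) < K := by exact_mod_cast hK
      rw [ae_restrict_iff' measurableSet_Ioc]
      filter_upwards with t ht
      have h1 : (K:ℝ)⁻¹ ∈ Set.Icc (0:ℝ) 1 :=
        ⟨inv_nonneg.mpr hKpos.le, inv_le_one_of_one_le₀ (by exact_mod_cast hK)⟩
      have h2 : (⌈(K:ℝ) * t⌉₊ : ℝ) / K ∈ Set.Icc (0:ℝ) 1 := by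
        constructor
        · positivity
        · rw [div_le_one hKpos]
          have : ⌈(K:ℝ) * t⌉₊ ≤ K := by
            rw [Nat.ceil_le]
            calc (K:ℝ) * t ≤ (K:ℝ) * 1 := by nlinarith [ht.1, ht.2]
            _ = K := mul_one _
          exact_mod_cast this
      exact hM _ (Set.mk_mem_prod h1 h2)
    · exact integrableOn_const measure_Ioc_lt_top.ne
    · rw [ae_restrict_iff' measurableSet_Ioc]
      filter_upwards with t ht
      have h1 : Tendsto (fun K : ℕ => (K:ℝ)⁻¹) atTop (nhds 0) :=
        tendsto_inv_atTop_nhds_zero_nat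
      have h2 : Tendsto (fun K : ℕ => (⌈(K:ℝ) * t⌉₊ : ℝ) / K) atTop (nhds t) := by
        apply tendsto_of_tendsto_of_tendsto_of_le_of_le' (tendsto_const_nhds)
          (by simpa using tendsto_const_nhds.add h1 : Tendsto (fun K : ℕ => t + (K:ℝ)⁻¹) atTop (nhds t))
        · filter_upwards [eventually_ge_atTop 1] with K hK
          have hKpos : (0:ℝ) < K := by exact_mod_cast hK
          rw [le_div_iff₀ hKpos, mul_comm]
          exact Nat.le_ceil _
        · filter_upwards [eventually_ge_atTop 1] with K hK
          have hKpos : (0:ℝ) < K := by exact_mod_cast hK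
          rw [div_le_iff₀ hKpos]
          have := Nat.ceil_lt_add_one (a := (K:ℝ)*t) (by nlinarith [ht.1])
          calc (⌈(K:ℝ)*t⌉₊:ℝ) ≤ (K:ℝ)*t + 1 := this.le
          _ = (t + (K:ℝ)⁻¹) * K := by field_simp
      have h3 : Tendsto (fun K : ℕ => ((K:ℝ)⁻¹, (⌈(K:ℝ) * t⌉₊ : ℝ) / K)) atTop
          (nhds ((0:ℝ), t)) := h1.prodMk_nhds h2
      exact (hg.tendsto ((0:ℝ), t)).comp h3
  rw [intervalIntegral.integral_of_le zero_le_one]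
  exact stepB.congr' (by filter_upwards [eventually_ge_atTop 1] with K hK using stepA K hK)


section core
variable {d : ℕ}


noncomputable def Gm (v : ℝ → (EuclideanSpace ℝ (Fin d)) → (EuclideanSpace ℝ (Fin d))) (t : ℝ) (x : (EuclideanSpace ℝ (Fin d))) : Fin d → Fin d → ℝ :=
  fun i j => (fderiv ℝ (v t) x (EuclideanSpace.single j 1)) i

noncomputable def Psi (u : ℝ → (EuclideanSpace ℝ (Fin d)) → ℝ) (v : ℝ → (EuclideanSpace ℝ (Fin d)) → (EuclideanSpace ℝ (Fin d))) (h t : ℝ) (x : (EuclideanSpace ℝ (Fin d))) : ℝ :=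
  detF d (h, Gm v t x) * u t (x + h • v t x) - u (t - h) x

noncomputable def dPsi (u : ℝ → (EuclideanSpace ℝ (Fin d)) → ℝ) (v : ℝ → (EuclideanSpace ℝ (Fin d)) → (EuclideanSpace ℝ (Fin d))) (h t : ℝ) (x : (EuclideanSpace ℝ (Fin d))) : ℝ :=
  fderiv ℝ (detF d) (h, Gm v t x) (1, 0) * u t (x + h • v t x)
  + detF d (h, Gm v t x) * fderiv ℝ (u t) (x + h • v t x) (v t x)
  + deriv (fun τ => u τ x) (t - h)

noncomputable def Aq (u : ℝ → (EuclideanSpace ℝ (Fin d)) → ℝ) (v : ℝ → (EuclideanSpace ℝ (Fin d)) → (EuclideanSpace ℝ (Fin d))) (h t : ℝ) (x : (EuclideanSpace ℝ (Fin d))) : ℝ :=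
  ∫ s in (0:ℝ)..1, dPsi u v (h * s) t x

variable {u : ℝ → (EuclideanSpace ℝ (Fin d)) → ℝ} {v : ℝ → (EuclideanSpace ℝ (Fin d)) → (EuclideanSpace ℝ (Fin d))}
variable (hu : ContDiff ℝ (⊤ : ℕ∞) fun p : ℝ × (EuclideanSpace ℝ (Fin d)) => u p.1 p.2)
variable (hv : ContDiff ℝ (⊤ : ℕ∞) fun p : ℝ × (EuclideanSpace ℝ (Fin d)) => v p.1 p.2)
include hu hv

omit hv in
lemma hut (t : ℝ) : ContDiff ℝ (⊤ : ℕ∞) (u t) := hu.comp (contDiff_const.prodMk contDiff_id)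
omit hu in
lemma hvt (t : ℝ) : ContDiff ℝ (⊤ : ℕ∞) (v t) := hv.comp (contDiff_const.prodMk contDiff_id)

omit hu in
lemma Lv_cont : Continuous fun q : ℝ × (EuclideanSpace ℝ (Fin d)) => fderiv ℝ (v q.1) q.2 := by
  have : ContDiff ℝ (⊤ : ℕ∞) fun q : ℝ × (EuclideanSpace ℝ (Fin d)) => fderiv ℝ (v q.1) q.2 := by
    apply ContDiff.fderiv (𝕜 := ℝ) (f := fun (q : ℝ × (EuclideanSpace ℝ (Fin d))) (y : (EuclideanSpace ℝ (Fin d))) => v q.1 y) (g := Prod.snd)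
      (hv.comp ((contDiff_fst.comp contDiff_fst).prodMk contDiff_snd)) contDiff_snd (by simp)
  exact this.continuous

omit hv in
lemma Lu_cont : Continuous fun q : ℝ × (EuclideanSpace ℝ (Fin d)) => fderiv ℝ (u q.1) q.2 := by
  have : ContDiff ℝ (⊤ : ℕ∞) fun q : ℝ × (EuclideanSpace ℝ (Fin d)) => fderiv ℝ (u q.1) q.2 := by
    apply ContDiff.fderiv (𝕜 := ℝ) (f := fun (q : ℝ × (EuclideanSpace ℝ (Fin d))) (y : (EuclideanSpace ℝ (Fin d))) => u q.1 y) (g := Prod.snd)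
      (hu.comp ((contDiff_fst.comp contDiff_fst).prodMk contDiff_snd)) contDiff_snd (by simp)
  exact this.continuous

omit hv in
lemma Lt_cont : Continuous fun q : ℝ × (EuclideanSpace ℝ (Fin d)) => deriv (fun τ => u τ q.2) q.1 := by
  have h1 : ContDiff ℝ (⊤ : ℕ∞) fun q : ℝ × (EuclideanSpace ℝ (Fin d)) => fderiv ℝ (fun τ => u τ q.2) q.1 := by
    apply ContDiff.fderiv (𝕜 := ℝ) (f := fun (q : ℝ × (EuclideanSpace ℝ (Fin d))) (τ : ℝ) => u τ q.2) (g := Prod.fst)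
      (hu.comp (contDiff_snd.prodMk (contDiff_snd.comp contDiff_fst))) contDiff_fst (by simp)
  have h2 : Continuous fun q : ℝ × (EuclideanSpace ℝ (Fin d)) => (fderiv ℝ (fun τ => u τ q.2) q.1) 1 :=
    isBoundedBilinearMap_apply.continuous.comp (h1.continuous.prodMk continuous_const)
  simpa only [fderiv_apply_one_eq_deriv] using h2

omit hu in
lemma Gm_cont : Continuous fun q : ℝ × (EuclideanSpace ℝ (Fin d)) => Gm v q.1 q.2 := by
  apply continuous_pi; intro i; apply continuous_pi; intro j
  have h2 : Continuous fun q : ℝ × (EuclideanSpace ℝ (Fin d)) => fderiv ℝ (v q.1) q.2 (EuclideanSpace.single j 1) :=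
    isBoundedBilinearMap_apply.continuous.comp ((Lv_cont hv).prodMk continuous_const)
  exact (continuous_apply i).comp (Continuous.comp (g := WithLp.ofLp) (by fun_prop) h2)

lemma dPsi_cont : Continuous fun p : ℝ × ℝ × (EuclideanSpace ℝ (Fin d)) => dPsi u v p.1 p.2.1 p.2.2 := by
  have hvc : Continuous fun p : ℝ × (EuclideanSpace ℝ (Fin d)) => v p.1 p.2 := hv.continuous
  have huc : Continuous fun p : ℝ × (EuclideanSpace ℝ (Fin d)) => u p.1 p.2 := hu.continuous
  -- the map p ↦ (p.1, Gm v p.2.1 p.2.2)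
  have hpair : Continuous fun p : ℝ × ℝ × (EuclideanSpace ℝ (Fin d)) => ((p.1, Gm v p.2.1 p.2.2) : ℝ × (Fin d → Fin d → ℝ)) :=
    continuous_fst.prodMk ((Gm_cont hv).comp continuous_snd)
  -- the shifted point x + h • v t x
  have hshift : Continuous fun p : ℝ × ℝ × (EuclideanSpace ℝ (Fin d)) => p.2.2 + p.1 • v p.2.1 p.2.2 :=
    (continuous_snd.snd).add (continuous_fst.smul (hvc.comp continuous_snd))
  have c1 : Continuous fun p : ℝ × ℝ × (EuclideanSpace ℝ (Fin d)) => fderiv ℝ (detF d) (p.1, Gm v p.2.1 p.2.2) (1, 0) :=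
    isBoundedBilinearMap_apply.continuous.comp
      ((((detF_contDiff d).continuous_fderiv (by simp)).comp hpair).prodMk continuous_const)
  have c2 : Continuous fun p : ℝ × ℝ × (EuclideanSpace ℝ (Fin d)) => u p.2.1 (p.2.2 + p.1 • v p.2.1 p.2.2) :=
    huc.comp ((continuous_snd.fst).prodMk hshift)
  have c3 : Continuous fun p : ℝ × ℝ × (EuclideanSpace ℝ (Fin d)) => detF d (p.1, Gm v p.2.1 p.2.2) :=
    (detF_contDiff d).continuous.comp hpair
  have c4 : Continuous fun p : ℝ × ℝ × (EuclideanSpace ℝ (Fin d)) =>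
      fderiv ℝ (u p.2.1) (p.2.2 + p.1 • v p.2.1 p.2.2) (v p.2.1 p.2.2) :=
    isBoundedBilinearMap_apply.continuous.comp
      (((Lu_cont hu).comp ((continuous_snd.fst).prodMk hshift)).prodMk (hvc.comp continuous_snd))
  have c5 : Continuous fun p : ℝ × ℝ × (EuclideanSpace ℝ (Fin d)) => deriv (fun τ => u τ p.2.2) (p.2.1 - p.1) :=
    (Lt_cont hu).comp ((continuous_snd.fst.sub continuous_fst).prodMk (continuous_snd.snd))
  exact ((c1.mul c2).add (c3.mul c4)).add c5

omit hv in
lemma Psi_hasDerivAt (t : ℝ) (x : (EuclideanSpace ℝ (Fin d))) (h : ℝ) :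
    HasDerivAt (fun r => Psi u v r t x) (dPsi u v h t x) h := by
  have hM : HasDerivAt (fun r : ℝ => detF d (r, Gm v t x))
      (fderiv ℝ (detF d) (h, Gm v t x) (1, 0)) h := by
    have hF : HasFDerivAt (detF d) (fderiv ℝ (detF d) (h, Gm v t x)) (h, Gm v t x) :=
      (((detF_contDiff d).differentiable (by simp)) (h, Gm v t x)).hasFDerivAt
    have hline : HasDerivAt (fun r : ℝ => ((r, Gm v t x) : ℝ × (Fin d → Fin d → ℝ)))
        ((1 : ℝ), (0 : Fin d → Fin d → ℝ)) h := (hasDerivAt_id h).prodMk (hasDerivAt_const h _)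
    exact hF.comp_hasDerivAt h hline
  have hU : HasDerivAt (fun r : ℝ => u t (x + r • v t x))
      (fderiv ℝ (u t) (x + h • v t x) (v t x)) h := by
    have hF : HasFDerivAt (u t) (fderiv ℝ (u t) (x + h • v t x)) (x + h • v t x) :=
      (((hut hu t).differentiable (by simp)) _).hasFDerivAt
    have hline : HasDerivAt (fun r : ℝ => x + r • v t x) (v t x) h := by
      exact ((hasDerivAt_const h x).add ((hasDerivAt_id h).smul_const (v t x))).congr_deriv (by simp)
    exact hF.comp_hasDerivAt h hline
  have hW : HasDerivAt (fun r : ℝ => u (t - r) x) (-(deriv (fun τ => u τ x) (t - h))) h := by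
    have hw : HasDerivAt (fun τ => u τ x) (deriv (fun τ => u τ x) (t - h)) (t - h) := by
      apply DifferentiableAt.hasDerivAt
      exact ((hu.comp (contDiff_id.prodMk contDiff_const)).differentiable (by simp)).differentiableAt
    have hline : HasDerivAt (fun r : ℝ => t - r) (-1) h := by
      exact ((hasDerivAt_const h t).sub (hasDerivAt_id h)).congr_deriv (by simp)
    exact (hw.comp h hline).congr_deriv (by ring)
  have := (hM.mul hU).sub hW
  refine this.congr_deriv ?_
  simp only [dPsi]
  ring

omit hu hv in
lemma Psi_zero (t : ℝ) (x : (EuclideanSpace ℝ (Fin d))) : Psi u v 0 t x = 0 := by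
  have : detF d (0, Gm v t x) = 1 := by
    simp [detF]
  simp [Psi, this]

lemma Psi_eq_mul_Aq (h t : ℝ) (x : (EuclideanSpace ℝ (Fin d))) : Psi u v h t x = h * Aq u v h t x := by
  have hder : ∀ s ∈ Set.uIcc (0:ℝ) h, HasDerivAt (fun r => Psi u v r t x) (dPsi u v s t x) s :=
    fun s _ => Psi_hasDerivAt hu t x s
  have hint : IntervalIntegrable (fun s => dPsi u v s t x) volume 0 h := by
    apply Continuous.intervalIntegrable
    exact (dPsi_cont hu hv).comp ((continuous_id).prodMk
      (continuous_const.prodMk continuous_const))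
  have hftc := intervalIntegral.integral_eq_sub_of_hasDerivAt hder hint
  rw [Psi_zero, sub_zero] at hftc
  have hcv := intervalIntegral.smul_integral_comp_mul_left
    (a := (0:ℝ)) (b := 1) (fun s => dPsi u v s t x) h
  rw [mul_zero, mul_one] at hcv
  rw [Aq, ← smul_eq_mul, hcv, hftc]

omit hu hv in
lemma Aq_zero (t : ℝ) (x : (EuclideanSpace ℝ (Fin d))) : Aq u v 0 t x = dPsi u v 0 t x := by
  simp [Aq]

lemma Aq_cont : Continuous fun p : ℝ × ℝ × (EuclideanSpace ℝ (Fin d)) => Aq u v p.1 p.2.1 p.2.2 := by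
  have key : Continuous fun q : (ℝ × ℝ × (EuclideanSpace ℝ (Fin d))) × ℝ =>
      dPsi u v (q.1.1 * q.2) q.1.2.1 q.1.2.2 :=
    (dPsi_cont hu hv).comp ((continuous_fst.fst.mul continuous_snd).prodMk
      (continuous_fst.snd.fst.prodMk continuous_fst.snd.snd))
  exact intervalIntegral.continuous_parametric_intervalIntegral_of_continuous' (μ := volume)
    (f := fun (p : ℝ × ℝ × (EuclideanSpace ℝ (Fin d))) (s : ℝ) => dPsi u v (p.1 * s) p.2.1 p.2.2)
    key 0 1

end core

section core2
variable {d : ℕ}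
variable {u : ℝ → (EuclideanSpace ℝ (Fin d)) → ℝ} {v : ℝ → (EuclideanSpace ℝ (Fin d)) → (EuclideanSpace ℝ (Fin d))}
variable (hu : ContDiff ℝ (⊤ : ℕ∞) fun p : ℝ × (EuclideanSpace ℝ (Fin d)) => u p.1 p.2)
variable (hv : ContDiff ℝ (⊤ : ℕ∞) fun p : ℝ × (EuclideanSpace ℝ (Fin d)) => v p.1 p.2)
include hu hv

lemma dPsi_zero_eq (t : ℝ) (x : EuclideanSpace ℝ (Fin d)) :
    dPsi u v 0 t x = deriv (fun τ => u τ x) t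
      + ∑ i, fderiv ℝ (fun y => u t y * v t y i) x (EuclideanSpace.single i 1) := by
  classical
  -- the derivative of the determinant factor at 0 is the trace
  have hm : fderiv ℝ (detF d) (0, Gm v t x) (1, 0) = Matrix.trace (Matrix.of (Gm v t x)) := by
    have hF : HasFDerivAt (detF d) (fderiv ℝ (detF d) (0, Gm v t x)) (0, Gm v t x) :=
      (((detF_contDiff d).differentiable (by simp)) _).hasFDerivAt
    have hline : HasDerivAt (fun r : ℝ => ((r, Gm v t x) : ℝ × (Fin d → Fin d → ℝ)))
        ((1 : ℝ), (0 : Fin d → Fin d → ℝ)) 0 := (hasDerivAt_id 0).prodMk (hasDerivAt_const 0 _)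
    exact (HasFDerivAt.comp_hasDerivAt (l := detF d) (f := fun r : ℝ => ((r, Gm v t x) : ℝ × (Fin d → Fin d → ℝ))) (0:ℝ) hF hline).unique (detF_hasDerivAt_zero _)
  have h1 : detF d (0, Gm v t x) = 1 := by simp [detF]
  -- decomposition of v t x in the standard basis
  have hvsum : v t x = ∑ i, v t x i • EuclideanSpace.single i (1:ℝ) := by
    have := (EuclideanSpace.basisFun (Fin d) ℝ).sum_repr (v t x)
    simp only [EuclideanSpace.basisFun_apply, EuclideanSpace.basisFun_repr] at this
    exact this.symm
  have hDuv : fderiv ℝ (u t) x (v t x)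
      = ∑ i, v t x i * fderiv ℝ (u t) x (EuclideanSpace.single i 1) := by
    conv_lhs => rw [hvsum]
    rw [map_sum]
    simp only [_root_.map_smul, smul_eq_mul]
  -- derivative of each coordinate function of v
  have hdvF : ∀ i, fderiv ℝ (fun y => v t y i) x
      = (EuclideanSpace.proj i : EuclideanSpace ℝ (Fin d) →L[ℝ] ℝ).comp (fderiv ℝ (v t) x) := by
    intro i
    have hdv : HasFDerivAt (v t) (fderiv ℝ (v t) x) x :=
      (((hvt hv t).differentiable (by simp)) x).hasFDerivAt
    exact ((EuclideanSpace.proj i : EuclideanSpace ℝ (Fin d) →L[ℝ] ℝ).hasFDerivAt.comp x hdv).fderiv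
  have hprod : ∀ i : Fin d, fderiv ℝ (fun y => u t y * v t y i) x (EuclideanSpace.single i 1)
      = v t x i * fderiv ℝ (u t) x (EuclideanSpace.single i 1)
        + u t x * (fderiv ℝ (v t) x (EuclideanSpace.single i 1) i) := by
    intro i
    have hdu : DifferentiableAt ℝ (u t) x := ((hut hu t).differentiable (by simp)) x
    have hdvi : DifferentiableAt ℝ (fun y => v t y i) x := by
      have := ((EuclideanSpace.proj i : EuclideanSpace ℝ (Fin d) →L[ℝ] ℝ).differentiableAt).comp x
        (((hvt hv t).differentiable (by simp)) x)
      exact this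
    rw [fderiv_fun_mul hdu hdvi]
    rw [ContinuousLinearMap.add_apply, ContinuousLinearMap.smul_apply,
      ContinuousLinearMap.smul_apply, hdvF i]
    simp only [smul_eq_mul, ContinuousLinearMap.comp_apply, PiLp.proj_apply]
    ring
  have htr : Matrix.trace (Matrix.of (Gm v t x))
      = ∑ i, (fderiv ℝ (v t) x (EuclideanSpace.single i 1) i) := by
    simp [Matrix.trace, Matrix.diag, Gm]
  simp only [dPsi, zero_smul, add_zero, sub_zero, hm, h1, one_mul, hDuv, htr]
  rw [Finset.sum_congr rfl fun i _ => hprod i, Finset.sum_add_distrib, ← Finset.mul_sum]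
  ring

end core2

private lemma matrix_eq {d : ℕ} (h : ℝ) (m : Fin d → Fin d → ℝ) :
    (Matrix.of fun i j => (if i = j then (1:ℝ) else 0) + h * m i j)
      = 1 + h • Matrix.of m := by
  ext i j
  simp [Matrix.one_apply, Matrix.add_apply, Matrix.smul_apply, smul_eq_mul]

/-- **Consistency of the discrete source (density modulation) cost.**  For smooth
`u, v` on `[0,1] × D`, with `u_k^K = u(k/K)`, `φ_k^K = (1/K)·v(k/K) + Id`, the discrete
source cost `K·Σ_{k=1}^K ∫_D |det(Dφ_k^K)·(u_k^K ∘ φ_k^K) − u_{k−1}^K|² dx` converges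
to `∫₀¹∫_D |∂_t u + div(u v)|² dx dt`. -/
theorem discrete_source_cost_consistency {d : ℕ}
    (D : Set (EuclideanSpace ℝ (Fin d))) (hDconv : Convex ℝ D)
    (hDopen : IsOpen D) (hDbdd : Bornology.IsBounded D)
    (u : ℝ → EuclideanSpace ℝ (Fin d) → ℝ)
    (v : ℝ → EuclideanSpace ℝ (Fin d) → EuclideanSpace ℝ (Fin d))
    (hu : ContDiff ℝ (⊤ : ℕ∞) fun p : ℝ × EuclideanSpace ℝ (Fin d) => u p.1 p.2)
    (hv : ContDiff ℝ (⊤ : ℕ∞) fun p : ℝ × EuclideanSpace ℝ (Fin d) => v p.1 p.2)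
    (G : ℝ → EuclideanSpace ℝ (Fin d) → Fin d → Fin d → ℝ)
    (hG : ∀ t x i j, G t x i j = (fderiv ℝ (v t) x (EuclideanSpace.single j 1)) i) :
    Filter.Tendsto
      (fun K : ℕ =>
        (K : ℝ) * ∑ k ∈ Finset.Icc 1 K,
          ∫ x in D,
            (Matrix.det (Matrix.of fun i j =>
                (if i = j then (1:ℝ) else 0) + (K : ℝ)⁻¹ * G ((k : ℝ) / K) x i j)
              * u ((k : ℝ) / K) (x + (K : ℝ)⁻¹ • v ((k : ℝ) / K) x)
              - u (((k : ℝ) - 1) / K) x) ^ 2)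
      Filter.atTop
      (nhds (∫ t in (0:ℝ)..1, ∫ x in D,
        (deriv (fun τ => u τ x) t
          + ∑ i, fderiv ℝ (fun y => u t y * v t y i) x (EuclideanSpace.single i 1)) ^ 2)) := by
  classical
  have hGeq : G = Gm v := by
    funext t x i j
    exact hG t x i j
  set g : ℝ → ℝ → ℝ := fun h t => ∫ x in D, (Aq u v h t x) ^ 2 with hgdef
  -- continuity of g
  have hDae : (D : Set (EuclideanSpace ℝ (Fin d))) =ᵐ[volume] closure D := by
    have hfr : volume (frontier D) = 0 := hDconv.addHaar_frontier volume
    rw [MeasureTheory.ae_eq_set]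
    constructor
    · rw [Set.diff_eq_empty.mpr subset_closure]; simp
    · rw [← hDopen.frontier_eq]; exact hfr
  have hgc : Continuous fun p : ℝ × ℝ => g p.1 p.2 := by
    have heq : (fun p : ℝ × ℝ => g p.1 p.2)
        = fun p : ℝ × ℝ => ∫ x in closure D, (Aq u v p.1 p.2 x) ^ 2 := by
      funext p
      exact setIntegral_congr_set hDae
    rw [heq]
    have hf : Continuous (Function.uncurry
        fun (p : ℝ × ℝ) (x : EuclideanSpace ℝ (Fin d)) => (Aq u v p.1 p.2 x) ^ 2) := by
      have : Continuous fun q : (ℝ × ℝ) × EuclideanSpace ℝ (Fin d) =>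
          (Aq u v q.1.1 q.1.2 q.2) ^ 2 :=
        ((Aq_cont hu hv).comp ((continuous_fst.fst).prodMk
          ((continuous_fst.snd).prodMk continuous_snd))).pow 2
      exact this
    exact continuous_parametric_integral_of_continuous hf hDbdd.isCompact_closure
  have hriem := riemann_param g hgc
  -- eventual equality of the two sequences
  have hev : (fun K : ℕ => (K : ℝ)⁻¹ * ∑ k ∈ Finset.Icc 1 K, g (K : ℝ)⁻¹ ((k : ℝ) / K))
      =ᶠ[Filter.atTop] fun K : ℕ =>
        (K : ℝ) * ∑ k ∈ Finset.Icc 1 K,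
          ∫ x in D,
            (Matrix.det (Matrix.of fun i j =>
                (if i = j then (1:ℝ) else 0) + (K : ℝ)⁻¹ * G ((k : ℝ) / K) x i j)
              * u ((k : ℝ) / K) (x + (K : ℝ)⁻¹ • v ((k : ℝ) / K) x)
              - u (((k : ℝ) - 1) / K) x) ^ 2 := by
    filter_upwards [Filter.eventually_ge_atTop 1] with K hK
    have hKpos : (0:ℝ) < K := by exact_mod_cast hK
    have hKne : (K:ℝ) ≠ 0 := ne_of_gt hKpos
    have hx : ∀ (k : ℕ) (x : EuclideanSpace ℝ (Fin d)),
        (Matrix.det (Matrix.of fun i j =>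
            (if i = j then (1:ℝ) else 0) + (K : ℝ)⁻¹ * G ((k : ℝ) / K) x i j)
          * u ((k : ℝ) / K) (x + (K : ℝ)⁻¹ • v ((k : ℝ) / K) x)
          - u (((k : ℝ) - 1) / K) x) ^ 2
        = ((K:ℝ)⁻¹) ^ 2 * (Aq u v (K:ℝ)⁻¹ ((k : ℝ) / K) x) ^ 2 := by
      intro k x
      have h1 : ((k : ℝ) - 1) / K = (k : ℝ) / K - (K : ℝ)⁻¹ := by
        rw [sub_div, one_div]
      have h2 : Matrix.det (Matrix.of fun i j =>
            (if i = j then (1:ℝ) else 0) + (K : ℝ)⁻¹ * G ((k : ℝ) / K) x i j)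
          = detF d ((K:ℝ)⁻¹, Gm v ((k : ℝ) / K) x) := by
        rw [hGeq, matrix_eq]; rfl
      rw [h2, h1]
      rw [show detF d ((K:ℝ)⁻¹, Gm v ((k : ℝ) / K) x)
            * u ((k : ℝ) / K) (x + (K:ℝ)⁻¹ • v ((k : ℝ) / K) x)
            - u ((k : ℝ) / K - (K:ℝ)⁻¹) x
          = Psi u v (K:ℝ)⁻¹ ((k : ℝ) / K) x from rfl]
      rw [Psi_eq_mul_Aq hu hv, mul_pow]
    have hterm : ∀ k : ℕ,
        (∫ x in D, (Matrix.det (Matrix.of fun i j =>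
            (if i = j then (1:ℝ) else 0) + (K : ℝ)⁻¹ * G ((k : ℝ) / K) x i j)
          * u ((k : ℝ) / K) (x + (K : ℝ)⁻¹ • v ((k : ℝ) / K) x)
          - u (((k : ℝ) - 1) / K) x) ^ 2)
        = ((K:ℝ)⁻¹) ^ 2 * g (K:ℝ)⁻¹ ((k : ℝ) / K) := by
      intro k
      rw [hgdef]
      simp only [hx k]
      exact MeasureTheory.integral_const_mul _ _
    calc (K : ℝ)⁻¹ * ∑ k ∈ Finset.Icc 1 K, g (K : ℝ)⁻¹ ((k : ℝ) / K)
        = (K : ℝ) * ∑ k ∈ Finset.Icc 1 K, ((K:ℝ)⁻¹) ^ 2 * g (K:ℝ)⁻¹ ((k : ℝ) / K) := by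
          rw [← Finset.mul_sum, ← mul_assoc]
          congr 1
          field_simp
      _ = _ := by
          congr 1
          exact Finset.sum_congr rfl fun k _ => (hterm k).symm
  -- identify the limit
  have hlim : (∫ t in (0:ℝ)..1, g 0 t)
      = ∫ t in (0:ℝ)..1, ∫ x in D,
        (deriv (fun τ => u τ x) t
          + ∑ i, fderiv ℝ (fun y => u t y * v t y i) x (EuclideanSpace.single i 1)) ^ 2 := by
    apply intervalIntegral.integral_congr
    intro t _
    refine setIntegral_congr_fun hDopen.measurableSet fun x _ => ?_
    show (Aq u v 0 t x) ^ 2 = _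
    rw [(Aq_zero (u := u) (v := v) t x).trans (dPsi_zero_eq hu hv t x)]
  rw [← hlim]
  exact hriem.congr' hev
end
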